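/- arXiv:1509.02061 — 11 statements merged into one kernel-verified Lean document; each statement's English description precedes it below -/
import Mathlib

section
/- Let X be a Banach space, x* ∈ S_{X*}, ε > 0, and x ∈ S(B_X, x*, ε) ∩ S_X (i.e., x is a norm-one element with x*(x) > 1 - ε). Then for every 0 < δ < ε there exists y* ∈ S_{X*} such that x ∈ S(B_X, y*, δ) and S(B_X, y*, δ) ⊆ S(B_X, x*, ε). -/
noncomputable section

open Filter Topology Metric Set NormedSpace

/-- A subset of a normed space is weakly open if its image in `WeakSpace ℝ X` is open. -/
def IsWeaklyOpen (X : Type*) [NormedAddCommGroup X] [NormedSpace ℝ X] (U : Set X) : Prop :=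
  IsOpen (toWeakSpace ℝ X '' U)

/-- A subset of a dual space is weak-star open. -/
def IsWStarOpen {Y : Type*} [NormedAddCommGroup Y] [NormedSpace ℝ Y]
    (U : Set (StrongDual ℝ Y)) : Prop :=
  IsOpen (StrongDual.toWeakDual '' U)

/-- The diametral diameter two property. -/
def DD2P (X : Type*) [NormedAddCommGroup X] [NormedSpace ℝ X] : Prop :=
  ∀ V : Set X, IsWeaklyOpen X V →
    ∀ x ∈ V ∩ closedBall (0 : X) 1, ‖x‖ = 1 →
      ∀ ε > (0 : ℝ), ∃ y ∈ V ∩ closedBall (0 : X) 1, 2 - ε < ‖x - y‖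

/-- The weak-star diametral diameter two property for the dual of `Y`. -/
def WStarDD2P (Y : Type*) [NormedAddCommGroup Y] [NormedSpace ℝ Y] : Prop :=
  ∀ V : Set (StrongDual ℝ Y), IsWStarOpen V →
    ∀ f ∈ V ∩ closedBall (0 : StrongDual ℝ Y) 1, ‖f‖ = 1 →
      ∀ ε > (0 : ℝ), ∃ g ∈ V ∩ closedBall (0 : StrongDual ℝ Y) 1, 2 - ε < ‖f - g‖

/-- The convex combination `∑ λᵢ Wᵢ` of subsets. -/
def ConvComb {X : Type*} [NormedAddCommGroup X] [NormedSpace ℝ X]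
    (n : ℕ) (lam : Fin n → ℝ) (W : Fin n → Set X) : Set X :=
  {z | ∃ y : Fin n → X, (∀ i, y i ∈ W i) ∧ z = ∑ i, lam i • y i}

/-- The diametral strong diameter two property. -/
def DSD2P (X : Type*) [NormedAddCommGroup X] [NormedSpace ℝ X] : Prop :=
  ∀ (n : ℕ) (lam : Fin n → ℝ) (V : Fin n → Set X),
    (∀ i, 0 < lam i) → ∑ i, lam i = 1 →
    (∀ i, IsWeaklyOpen X (V i)) →
    (∀ i, (V i ∩ closedBall (0 : X) 1).Nonempty) →
    ∀ x ∈ ConvComb n lam (fun i => V i ∩ closedBall (0 : X) 1), ∀ ε > (0 : ℝ),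
      ∃ y ∈ ConvComb n lam (fun i => V i ∩ closedBall (0 : X) 1), 1 + ‖x‖ - ε < ‖x - y‖

/-- The slice of the unit ball determined by `f` and `α`. -/
def Slice {X : Type*} [NormedAddCommGroup X] [NormedSpace ℝ X]
    (f : StrongDual ℝ X) (α : ℝ) : Set X :=
  {x ∈ closedBall (0 : X) 1 | ‖f‖ - α < f x}

set_option maxHeartbeats 1000000 in
set_option synthInstance.maxHeartbeats 400000 in
/-- Lemma 1.3 (Kadets): pointed refinement of slices of the unit ball. -/
theorem slice_refinement {X : Type*} [NormedAddCommGroup X] [NormedSpace ℝ X] [CompleteSpace X]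
    (xstar : StrongDual ℝ X) (hxstar : ‖xstar‖ = 1) (ε : ℝ) (hε : 0 < ε)
    (x : X) (hx : ‖x‖ = 1) (hxS : x ∈ Slice xstar ε) :
    ∀ δ : ℝ, 0 < δ → δ < ε →
      ∃ ystar : StrongDual ℝ X, ‖ystar‖ = 1 ∧
        x ∈ Slice ystar δ ∧ Slice ystar δ ⊆ Slice xstar ε := by
  intro δ hδ0 hδε
  have hx0 : x ≠ 0 := by
    intro h; rw [h, norm_zero] at hx; norm_num at hx
  obtain ⟨g, hg1, hgx⟩ := exists_dual_vector ℝ x (norm_ne_zero_iff.mpr hx0)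
  rw [hx] at hgx
  norm_num at hgx
  simp only [Slice, Set.mem_setOf_eq, hxstar] at hxS
  obtain ⟨hxB, hxs⟩ := hxS
  set s : ℝ := xstar x with hs
  by_cases hδ2 : 2 ≤ δ
  · -- trivial case: huge slices
    refine ⟨g, hg1, ⟨hxB, by rw [hg1, hgx]; linarith⟩, ?_⟩
    rintro z ⟨hzB, _⟩
    have hz1 : ‖z‖ ≤ 1 := by rwa [mem_closedBall_zero_iff] at hzB
    refine ⟨hzB, ?_⟩
    have : |xstar z| ≤ ‖xstar‖ * ‖z‖ := xstar.le_opNorm z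
    rw [hxstar, one_mul] at this
    have h1 : -1 ≤ xstar z := by
      have := abs_le.mp (this.trans hz1)
      linarith [this.1]
    rw [hxstar]; linarith
  push_neg at hδ2
  set q : ℝ := |1 - δ| with hqdef
  have hq1 : q < 1 := abs_lt.mpr ⟨by linarith, by linarith⟩
  have hq0 : 0 ≤ q := abs_nonneg _
  set c : ℝ := min ((s + (1 - ε)) / 2) (1 - δ) with hcdef
  have hc_lt_s : c < s := lt_of_le_of_lt (min_le_left _ _) (by linarith)
  have hc_gt : 1 - ε < c := lt_min (by linarith) (by linarith)
  set Λ : ℝ := (q + |c| + 1) / (1 - q) with hΛdef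
  have hΛ0 : 0 ≤ Λ := div_nonneg (by positivity) (by linarith)
  set F : ℝ → ℝ := fun t => (1 - δ) * ‖xstar + t • g‖ - t with hFdef
  have hFcont : ContinuousOn F (Icc 0 Λ) := by
    apply Continuous.continuousOn
    exact (continuous_const.mul ((continuous_const.add
      (continuous_id.smul continuous_const)).norm)).sub continuous_id
  have hF0 : F 0 = 1 - δ := by simp [hFdef, hxstar]
  have hFΛ : F Λ ≤ c := by
    have hMle : ‖xstar + Λ • g‖ ≤ 1 + Λ := by
      calc ‖xstar + Λ • g‖ ≤ ‖xstar‖ + ‖Λ • g‖ := norm_add_le _ _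
        _ = 1 + Λ := by
              have hns : ‖Λ • g‖ = ‖Λ‖ * ‖g‖ := norm_smul Λ g
              rw [hxstar, hns, hg1, Real.norm_eq_abs, abs_of_nonneg hΛ0, mul_one]
    have h1 : (1 - δ) * ‖xstar + Λ • g‖ ≤ q * (1 + Λ) := by
      calc (1 - δ) * ‖xstar + Λ • g‖ ≤ q * ‖xstar + Λ • g‖ :=
            mul_le_mul_of_nonneg_right (le_abs_self _) (norm_nonneg _)
        _ ≤ q * (1 + Λ) := mul_le_mul_of_nonneg_left hMle hq0
    have h2 : Λ * (1 - q) = q + |c| + 1 :=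
      div_mul_cancel₀ _ (by linarith : (1:ℝ) - q ≠ 0)
    have h3 : -|c| - 1 ≤ c := by
      have := neg_abs_le c; linarith
    simp only [hFdef]
    nlinarith
  have hcF0 : c ≤ F 0 := by rw [hF0]; exact min_le_right _ _
  obtain ⟨t, ⟨ht0, _⟩, hFt⟩ := intermediate_value_Icc' hΛ0 hFcont ⟨hFΛ, hcF0⟩
  set M : ℝ := ‖xstar + t • g‖ with hMdef
  have hFt' : (1 - δ) * M - t = c := hFt
  have happx : (xstar + t • g) x = s + t := by
    rw [ContinuousLinearMap.add_apply, ContinuousLinearMap.smul_apply, hgx,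
        smul_eq_mul, mul_one, ← hs]
  have hstM : s + t ≤ M := by
    calc s + t = (xstar + t • g) x := happx.symm
      _ ≤ |(xstar + t • g) x| := le_abs_self _
      _ ≤ ‖xstar + t • g‖ * ‖x‖ := (xstar + t • g).le_opNorm x
      _ = M := by rw [hx, mul_one]
  have hM0 : 0 < M := by
    rcases (norm_nonneg (xstar + t • g)).lt_or_eq with h | h
    · exact h
    · exfalso
      rw [← hMdef] at h
      rw [← h, mul_zero, zero_sub] at hFt'
      have : s + t ≤ 0 := by rw [← h] at hstM; exact hstM
      linarith [hc_lt_s]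
  refine ⟨M⁻¹ • (xstar + t • g), ?_, ?_, ?_⟩
  · rw [norm_smul, Real.norm_eq_abs, abs_of_pos (inv_pos.mpr hM0), ← hMdef,
        inv_mul_cancel₀ hM0.ne']
  · refine ⟨hxB, ?_⟩
    rw [norm_smul, Real.norm_eq_abs, abs_of_pos (inv_pos.mpr hM0), ← hMdef,
        inv_mul_cancel₀ hM0.ne']
    have : (M⁻¹ • (xstar + t • g)) x = M⁻¹ * (s + t) := by
      rw [ContinuousLinearMap.smul_apply, happx, smul_eq_mul]
    rw [this, show M⁻¹ * (s + t) = (s + t) / M by ring, lt_div_iff₀ hM0]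
    nlinarith
  · rintro z ⟨hzB, hzS⟩
    have hz1 : ‖z‖ ≤ 1 := by rwa [mem_closedBall_zero_iff] at hzB
    rw [norm_smul, Real.norm_eq_abs, abs_of_pos (inv_pos.mpr hM0), ← hMdef,
        inv_mul_cancel₀ hM0.ne'] at hzS
    have hzval : (M⁻¹ • (xstar + t • g)) z = M⁻¹ * (xstar z + t * g z) := by
      rw [ContinuousLinearMap.smul_apply, ContinuousLinearMap.add_apply,
          ContinuousLinearMap.smul_apply, smul_eq_mul, smul_eq_mul]
    rw [hzval, show M⁻¹ * (xstar z + t * g z) = (xstar z + t * g z) / M by ring] at hzS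
    have hzS' : (1 - δ) * M < xstar z + t * g z := by
      rwa [← lt_div_iff₀ hM0]
    have hgz : g z ≤ 1 := by
      have : |g z| ≤ ‖g‖ * ‖z‖ := g.le_opNorm z
      rw [hg1, one_mul] at this
      linarith [le_abs_self (g z), this.trans hz1]
    have : t * g z ≤ t := by nlinarith
    refine ⟨hzB, ?_⟩
    rw [hxstar]
    nlinarith
end
end

section
/- Let X be a Banach space, x ∈ S_X, ε > 0, and x* ∈ S(B_{X*}, x, ε) ∩ S_{X*} (i.e., x* has norm one and x*(x) > 1 - ε). Then for every 0 < δ < ε there exists y ∈ S_X such that x* ∈ S(B_{X*}, y, δ) and S(B_{X*}, y, δ) ⊆ S(B_{X*}, x, ε). -/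
noncomputable section

open Filter Topology Metric Set NormedSpace

/-- The slice of the dual unit ball determined by `x ∈ X` and `α`. -/
def DualSlice {X : Type*} [NormedAddCommGroup X] [NormedSpace ℝ X]
    (x : X) (α : ℝ) : Set (StrongDual ℝ X) :=
  {f ∈ closedBall (0 : StrongDual ℝ X) 1 | ‖x‖ - α < f x}

set_option maxHeartbeats 1600000 in
/-- Dual version of the Kadets lemma: pointed refinement of weak-star slices. -/
theorem dual_slice_refinement {X : Type*} [NormedAddCommGroup X] [NormedSpace ℝ X]
    [CompleteSpace X]
    (x : X) (hx : ‖x‖ = 1) (ε : ℝ) (hε : 0 < ε)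
    (xstar : StrongDual ℝ X) (hxstar : ‖xstar‖ = 1) (hxS : xstar ∈ DualSlice x ε) :
    ∀ δ : ℝ, 0 < δ → δ < ε →
      ∃ y : X, ‖y‖ = 1 ∧ xstar ∈ DualSlice y δ ∧ DualSlice y δ ⊆ DualSlice x ε := by
  intro δ hδ hδε
  obtain ⟨hxball, hxval⟩ := hxS
  rw [hx] at hxval
  -- margin
  set η : ℝ := xstar x - (1 - ε) with hηdef
  have hη : 0 < η := by simp only [hηdef]; linarith
  have hxx1 : xstar x ≤ 1 := by
    calc xstar x ≤ ‖xstar x‖ := le_abs_self _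
    _ ≤ ‖xstar‖ * ‖x‖ := xstar.le_opNorm x
    _ = 1 := by rw [hxstar, hx]; ring
  have hηε : η ≤ ε := by simp only [hηdef]; linarith
  -- choose θ
  set θ : ℝ := min (1/2) (η * δ / (2 * ε * (1 + δ))) with hθdef
  have hθpos : 0 < θ := by
    apply lt_min (by norm_num)
    positivity
  have hθhalf : θ ≤ 1/2 := min_le_left _ _
  have hθ2 : θ ≤ η * δ / (2 * ε * (1 + δ)) := min_le_right _ _
  -- choose z with ‖z‖ ≤ 1 and xstar z > 1 - θ
  obtain ⟨z, hz1, hz2⟩ : ∃ z : X, ‖z‖ ≤ 1 ∧ 1 - θ < xstar z := by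
    obtain ⟨w, hw1, hw2⟩ := ContinuousLinearMap.exists_lt_apply_of_lt_opNorm xstar
      (r := 1 - θ) (by rw [hxstar]; linarith)
    rcases le_or_gt (xstar w) 0 with h | h
    · refine ⟨-w, by rw [norm_neg]; linarith, ?_⟩
      have : ‖xstar w‖ = -(xstar w) := by rw [Real.norm_eq_abs, abs_of_nonpos h]
      rw [map_neg]; linarith [this ▸ hw2]
    · refine ⟨w, le_of_lt hw1, ?_⟩
      have : ‖xstar w‖ = xstar w := by rw [Real.norm_eq_abs, abs_of_pos h]
      linarith [this ▸ hw2]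
  have hznorm : 1 - θ ≤ ‖z‖ := by
    have : xstar z ≤ ‖z‖ := by
      calc xstar z ≤ ‖xstar z‖ := le_abs_self _
      _ ≤ ‖xstar‖ * ‖z‖ := xstar.le_opNorm z
      _ = ‖z‖ := by rw [hxstar]; ring
    linarith
  -- the function g
  set g : ℝ → ℝ := fun l => (1 - δ) * ‖x + l • z‖ - l - 1 + ε with hgdef
  have hgcont : Continuous g := by fun_prop
  have hNub : ∀ l : ℝ, 0 ≤ l → ‖x + l • z‖ ≤ 1 + l := by
    intro l hl
    calc ‖x + l • z‖ ≤ ‖x‖ + ‖l • z‖ := norm_add_le _ _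
    _ ≤ 1 + l := by
        rw [hx, norm_smul, Real.norm_eq_abs, abs_of_nonneg hl]
        nlinarith [norm_nonneg z]
  have hNlb : ∀ l : ℝ, 0 ≤ l → l * (1 - θ) - 1 ≤ ‖x + l • z‖ := by
    intro l hl
    have h1 : ‖l • z‖ - ‖x‖ ≤ ‖x + l • z‖ := by
      have h := norm_sub_norm_le (l • z) (-x)
      rw [norm_neg, sub_neg_eq_add, add_comm] at h
      exact h
    rw [hx, norm_smul, Real.norm_eq_abs, abs_of_nonneg hl] at h1
    nlinarith
  have hg0 : 0 ≤ g 0 := by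
    simp only [hgdef, zero_smul, add_zero, hx]
    linarith
  -- a point where g is nonpositive
  obtain ⟨L, hL0, hgL⟩ : ∃ L : ℝ, 0 ≤ L ∧ g L ≤ 0 := by
    rcases le_or_gt δ 1 with hc | hc
    · refine ⟨ε / δ, by positivity, ?_⟩
      have hN := hNub (ε / δ) (by positivity)
      have : (1 - δ) * ‖x + (ε / δ) • z‖ ≤ (1 - δ) * (1 + ε / δ) :=
        mul_le_mul_of_nonneg_left hN (by linarith)
      have hd : δ * (ε / δ) = ε := by field_simp
      simp only [hgdef]
      nlinarith
    · refine ⟨2 * (δ + ε) + 2, by linarith, ?_⟩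
      set L := 2 * (δ + ε) + 2 with hLdef
      have hLpos : (0:ℝ) ≤ L := by simp only [hLdef]; linarith
      have hN := hNlb L hLpos
      have hLhalf : L / 2 - 1 ≤ L * (1 - θ) - 1 := by nlinarith
      have hge : L / 2 - 1 ≤ ‖x + L • z‖ := le_trans hLhalf hN
      have hub : (1 - δ) * ‖x + L • z‖ ≤ (1 - δ) * (L / 2 - 1) :=
        mul_le_mul_of_nonpos_left hge (by linarith)
      simp only [hgdef]
      nlinarith
  -- IVT
  obtain ⟨lam, hlamIcc, hglam⟩ : ∃ lam ∈ Icc (0:ℝ) L, g lam = 0 := by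
    have h := intermediate_value_Icc' hL0 hgcont.continuousOn
    have h0 : (0:ℝ) ∈ Icc (g L) (g 0) := ⟨hgL, hg0⟩
    obtain ⟨lam, hlam, hval⟩ := h h0
    exact ⟨lam, hlam, hval⟩
  obtain ⟨hlam0, _⟩ := hlamIcc
  set N : ℝ := ‖x + lam • z‖ with hNdef
  have hNub' : N ≤ 1 + lam := hNub lam hlam0
  have hkey : (1 - δ) * N = lam + 1 - ε := by
    simp only [hgdef] at hglam; linarith
  -- bound on lam
  have hlamB : lam ≤ ε * (1 + δ) / δ := by
    rcases le_or_gt δ 1 with hc | hc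
    · have : (1 - δ) * N ≤ (1 - δ) * (1 + lam) := mul_le_mul_of_nonneg_left hNub' (by linarith)
      have hδlam : δ * lam ≤ ε - δ := by nlinarith
      rw [le_div_iff₀ hδ]
      nlinarith
    · have hN0 : 0 ≤ N := norm_nonneg _
      have : (1 - δ) * N ≤ 0 := mul_nonpos_of_nonpos_of_nonneg (by linarith) hN0
      have hlamε : lam ≤ ε := by linarith
      calc lam ≤ ε := hlamε
      _ ≤ ε * (1 + δ) / δ := by
          rw [le_div_iff₀ hδ]; nlinarith
  have hlamθ : lam * θ ≤ η / 2 := by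
    have h1 : lam * θ ≤ (ε * (1 + δ) / δ) * (η * δ / (2 * ε * (1 + δ))) := by
      apply mul_le_mul hlamB hθ2 (le_of_lt hθpos)
      positivity
    have h2 : (ε * (1 + δ) / δ) * (η * δ / (2 * ε * (1 + δ))) = η / 2 := by
      field_simp
    linarith [h2 ▸ h1]
  -- key strict inequality
  have hYl : (1 - δ) * N < xstar (x + lam • z) := by
    have h1 : xstar (x + lam • z) = xstar x + lam * xstar z := by
      rw [map_add, map_smul]; simp [smul_eq_mul]
    have h2 : lam * (1 - θ) ≤ lam * xstar z :=
      mul_le_mul_of_nonneg_left (by linarith) hlam0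
    rw [h1, hkey]
    nlinarith
  have hNpos : 0 < N := by
    rcases eq_or_lt_of_le (norm_nonneg (x + lam • z)) with h | h
    · exfalso
      have hzero : x + lam • z = 0 := by
        rw [← norm_eq_zero]; exact h.symm
      rw [hzero] at hYl
      simp only [map_zero] at hYl
      have hN0 : N = 0 := by rw [hNdef, hzero, norm_zero]
      rw [hN0] at hYl
      linarith
    · exact h
  -- define y
  refine ⟨N⁻¹ • (x + lam • z), ?_, ?_, ?_⟩
  · rw [norm_smul, Real.norm_eq_abs, abs_of_pos (inv_pos.mpr hNpos), ← hNdef]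
    field_simp
  · refine ⟨hxball, ?_⟩
    have hyn : ‖N⁻¹ • (x + lam • z)‖ = 1 := by
      rw [norm_smul, Real.norm_eq_abs, abs_of_pos (inv_pos.mpr hNpos), ← hNdef]
      field_simp
    rw [hyn, map_smul]
    have : (1 - δ) * N < xstar (x + lam • z) := hYl
    have h2 : N⁻¹ * ((1 - δ) * N) < N⁻¹ * xstar (x + lam • z) :=
      mul_lt_mul_of_pos_left hYl (inv_pos.mpr hNpos)
    have h3 : N⁻¹ * ((1 - δ) * N) = 1 - δ := by field_simp
    simp only [smul_eq_mul]
    linarith [h3 ▸ h2]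
  · rintro f ⟨hfball, hfval⟩
    have hf1 : ‖f‖ ≤ 1 := by rwa [mem_closedBall_zero_iff] at hfball
    have hyn : ‖N⁻¹ • (x + lam • z)‖ = 1 := by
      rw [norm_smul, Real.norm_eq_abs, abs_of_pos (inv_pos.mpr hNpos), ← hNdef]
      field_simp
    rw [hyn] at hfval
    -- f (x + lam • z) > (1-δ) * N
    have h1 : f (N⁻¹ • (x + lam • z)) = N⁻¹ * f (x + lam • z) := by
      rw [map_smul]; simp [smul_eq_mul]
    have h2 : (1 - δ) * N < f (x + lam • z) := by
      have := hfval
      rw [h1] at this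
      have h3 : N * (1 - δ) < N * (N⁻¹ * f (x + lam • z)) :=
        mul_lt_mul_of_pos_left this hNpos
      have h4 : N * (N⁻¹ * f (x + lam • z)) = f (x + lam • z) := by field_simp
      linarith [h4 ▸ h3]
    have h5 : f (x + lam • z) = f x + lam * f z := by
      rw [map_add, map_smul]; simp [smul_eq_mul]
    have h6 : f z ≤ 1 := by
      calc f z ≤ ‖f z‖ := le_abs_self _
      _ ≤ ‖f‖ * ‖z‖ := f.le_opNorm z
      _ ≤ 1 := by nlinarith [norm_nonneg z, norm_nonneg f]
    have h7 : lam * f z ≤ lam := by nlinarith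
    refine ⟨hfball, ?_⟩
    rw [hx]
    nlinarith
end
end

section
/- A Banach space X has the diametral diameter two property (DD2P) if and only if for every x ∈ S_X there exists a net (x_s) in B_X converging weakly to x such that ‖x - x_s‖ → 2. -/
noncomputable section

open Filter Topology Metric Set NormedSpace

universe u

/-- Index type for the net in the forward direction. -/
def NetIdx (X : Type u) [NormedAddCommGroup X] [NormedSpace ℝ X] (x : X) : Type u :=
  {p : Set X × ℕ // IsWeaklyOpen X p.1 ∧ x ∈ p.1}

instance {X : Type u} [NormedAddCommGroup X] [NormedSpace ℝ X] {x : X} :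
    Preorder (NetIdx X x) where
  le a b := b.1.1 ⊆ a.1.1 ∧ a.1.2 ≤ b.1.2
  le_refl a := ⟨subset_rfl, le_rfl⟩
  le_trans a b c hab hbc := ⟨hbc.1.trans hab.1, hab.2.trans hbc.2⟩

lemma weakly_open_inter {X : Type u} [NormedAddCommGroup X] [NormedSpace ℝ X]
    {U V : Set X} (hU : IsWeaklyOpen X U) (hV : IsWeaklyOpen X V) :
    IsWeaklyOpen X (U ∩ V) := by
  unfold IsWeaklyOpen at *
  rw [Set.image_inter (toWeakSpace ℝ X).injective]
  exact hU.inter hV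

lemma weakly_open_preimage {X : Type u} [NormedAddCommGroup X] [NormedSpace ℝ X]
    (f : StrongDual ℝ X) {U : Set ℝ} (hU : IsOpen U) :
    IsWeaklyOpen X (f ⁻¹' U) := by
  unfold IsWeaklyOpen
  have : toWeakSpace ℝ X '' (f ⁻¹' U) =
      (fun w : WeakSpace ℝ X => (topDualPairing ℝ X).flip w f) ⁻¹' U := by
    ext w
    constructor
    · rintro ⟨y, hy, rfl⟩; exact hy
    · intro hw
      exact ⟨(toWeakSpace ℝ X).symm w, hw, by simp⟩
  rw [this]
  exact (WeakBilin.eval_continuous _ f).isOpen_preimage U hU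

/-- A Banach space has the DD2P iff every norm-one point is the weak limit of a net
in the unit ball at distance tending to `2`. -/
theorem dd2p_iff_nets {X : Type u} [NormedAddCommGroup X] [NormedSpace ℝ X] [CompleteSpace X] :
    DD2P X ↔ ∀ x : X, ‖x‖ = 1 →
      ∃ (ι : Type u) (l : Filter ι) (xs : ι → X), l.NeBot ∧
        (∀ s, xs s ∈ closedBall (0 : X) 1) ∧
        (∀ f : StrongDual ℝ X, Tendsto (fun s => f (xs s)) l (𝓝 (f x))) ∧
        Tendsto (fun s => ‖x - xs s‖) l (𝓝 2) := by
  constructor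
  · intro h x hx
    set ι := NetIdx X x with hι
    have hxB : x ∈ closedBall (0 : X) 1 := by
      simp [mem_closedBall_zero_iff, hx]
    have hUniv : IsWeaklyOpen X (Set.univ : Set X) := by
      unfold IsWeaklyOpen
      rw [Set.image_univ_of_surjective (toWeakSpace ℝ X).surjective]
      exact isOpen_univ
    have hnonempty : Nonempty ι := ⟨⟨(Set.univ, 0), hUniv, trivial⟩⟩
    have hdir : IsDirected ι (· ≤ ·) := by
      constructor
      intro a b
      refine ⟨⟨(a.1.1 ∩ b.1.1, max a.1.2 b.1.2),
        weakly_open_inter a.2.1 b.2.1, a.2.2, b.2.2⟩,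
        ⟨Set.inter_subset_left, le_max_left _ _⟩,
        ⟨Set.inter_subset_right, le_max_right _ _⟩⟩
    have H : ∀ s : ι, ∃ y ∈ s.1.1 ∩ closedBall (0 : X) 1,
        2 - 1 / (s.1.2 + 1) < ‖x - y‖ := by
      intro s
      exact h s.1.1 s.2.1 x ⟨s.2.2, hxB⟩ hx (1 / (s.1.2 + 1)) (by positivity)
    choose xs hmem hdist using H
    refine ⟨ι, atTop, xs, atTop_neBot_iff.2 ⟨hnonempty, hdir⟩,
      fun s => (hmem s).2, ?_, ?_⟩
    · intro f
      rw [Metric.tendsto_nhds]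
      intro ε hε
      rw [eventually_atTop]
      refine ⟨⟨(f ⁻¹' ball (f x) ε, 0),
        weakly_open_preimage f isOpen_ball, by simp [hε]⟩, fun s hs => ?_⟩
      have : xs s ∈ f ⁻¹' ball (f x) ε := hs.1 (hmem s).1
      simpa [Real.dist_eq] using this
    · rw [Metric.tendsto_nhds]
      intro ε hε
      obtain ⟨n, hn⟩ := exists_nat_one_div_lt hε
      rw [eventually_atTop]
      refine ⟨⟨(Set.univ, n), hUniv, trivial⟩, fun s hs => ?_⟩
      have h1 : 2 - 1 / ((n : ℝ) + 1) < ‖x - xs s‖ := by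
        refine lt_of_le_of_lt ?_ (hdist s)
        have : (1 : ℝ) / (s.1.2 + 1) ≤ 1 / ((n : ℝ) + 1) := by
          apply one_div_le_one_div_of_le (by positivity)
          have h' : (n : ℝ) ≤ (s.1.2 : ℝ) := Nat.cast_le.2 hs.2
          linarith
        linarith
      have h2 : ‖x - xs s‖ ≤ 2 := by
        have := mem_closedBall_zero_iff.1 (hmem s).2
        calc ‖x - xs s‖ ≤ ‖x‖ + ‖xs s‖ := norm_sub_le _ _
          _ ≤ 2 := by rw [hx]; linarith
      rw [Real.dist_eq, abs_lt]
      constructor <;> linarith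
  · intro h V hV x hxmem hx ε hε
    obtain ⟨ι, l, xs, hne, hball, hweak, hnorm⟩ := h x hx
    have hinj : Function.Injective ((topDualPairing ℝ X).flip) := by
      intro a b hab
      apply sub_eq_zero.1
      apply eq_zero_of_forall_dual_eq_zero ℝ
      intro f
      have hf : f a = f b := by
        have := LinearMap.congr_fun hab f
        simpa [topDualPairing] using this
      simp [map_sub, hf]
    have htend : Tendsto (fun s => toWeakSpace ℝ X (xs s)) l (𝓝 (toWeakSpace ℝ X x)) := by
      refine (WeakBilin.tendsto_iff_forall_eval_tendsto (topDualPairing ℝ X).flip hinj).2 ?_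
      intro f
      exact hweak f
    have hev1 : ∀ᶠ s in l, xs s ∈ V := by
      have hxV : toWeakSpace ℝ X x ∈ toWeakSpace ℝ X '' V := ⟨x, hxmem.1, rfl⟩
      have := htend.eventually (hV.mem_nhds hxV)
      filter_upwards [this] with s hs
      obtain ⟨y, hy, hyx⟩ := hs
      rwa [← (toWeakSpace ℝ X).injective hyx]
    have hev2 : ∀ᶠ s in l, 2 - ε < ‖x - xs s‖ :=
      hnorm.eventually (eventually_gt_nhds (by linarith))
    obtain ⟨s, hs1, hs2⟩ := (hev1.and hev2).exists
    exact ⟨xs s, ⟨hs1, hball s⟩, hs2⟩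
end
end

section
/- Let X be a Banach space such that X** has the w*-DD2P (with respect to the weak-star topology σ(X**, X*)). Then X has the DD2P. -/
noncomputable section

open Filter Topology Metric Set NormedSpace

lemma pi_clm_eq_sum {ι : Type*} [Fintype ι] [DecidableEq ι] (φ : (ι → ℝ) →L[ℝ] ℝ) (v : ι → ℝ) :
    φ v = ∑ i, v i * φ (Pi.single i (1:ℝ)) := by
  conv_lhs => rw [← Finset.univ_sum_single v]
  rw [map_sum]
  refine Finset.sum_congr rfl fun i _ => ?_
  have : (Pi.single i (v i) : ι → ℝ) = v i • (Pi.single i (1:ℝ) : ι → ℝ) := by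
    funext j
    by_cases h : j = i <;> simp [Pi.single_apply, h]
  rw [this, map_smul, smul_eq_mul]

lemma goldstine_finite {X : Type*} [NormedAddCommGroup X] [NormedSpace ℝ X]
    (G : StrongDual ℝ (StrongDual ℝ X)) (hG : ‖G‖ ≤ 1)
    (s : Finset (StrongDual ℝ X)) {δ : ℝ} (hδ : 0 < δ) :
    ∃ y : X, ‖y‖ ≤ 1 ∧ ∀ f ∈ s, |f y - G f| < δ := by
  classical
  set T : X →ₗ[ℝ] (↥s → ℝ) := LinearMap.pi (fun f => ((f : StrongDual ℝ X) : X →ₗ[ℝ] ℝ)) with hT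
  set S : Set (↥s → ℝ) := T '' closedBall 0 1 with hS
  set g : ↥s → ℝ := fun f => G f with hgdef
  have hTapp : ∀ (y : X) (f : ↥s), T y f = (f : StrongDual ℝ X) y := fun y f => rfl
  have hg : g ∈ closure S := by
    by_contra hgc
    have hconv : Convex ℝ (closure S) :=
      ((convex_closedBall (0:X) 1).linear_image T).closure
    obtain ⟨φ, u, hlt, hgt⟩ :=
      geometric_hahn_banach_closed_point hconv isClosed_closure hgc
    set c : ↥s → ℝ := fun i => φ (Pi.single i (1:ℝ)) with hc
    set F : StrongDual ℝ X := ∑ i : ↥s, c i • (i : StrongDual ℝ X) with hF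
    have hFeq : ∀ y : X, F y = φ (T y) := by
      intro y
      rw [pi_clm_eq_sum φ (T y), hF]
      simp only [ContinuousLinearMap.sum_apply, ContinuousLinearMap.coe_smul',
        Pi.smul_apply, smul_eq_mul]
      exact Finset.sum_congr rfl fun i _ => by rw [hTapp, mul_comm]
    have hFu : ∀ y : X, ‖y‖ ≤ 1 → F y < u := by
      intro y hy
      rw [hFeq]
      exact hlt _ (subset_closure ⟨y, by simpa [dist_eq_norm] using hy, rfl⟩)
    have hu0 : 0 < u := by
      have := hFu 0 (by simp)
      simpa using this
    have hFnorm : ‖F‖ ≤ u := by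
      refine ContinuousLinearMap.opNorm_le_of_unit_norm hu0.le fun y hy => ?_
      rw [Real.norm_eq_abs, abs_le]
      constructor
      · have := hFu (-y) (by simp [hy])
        rw [map_neg] at this; linarith
      · exact (hFu y hy.le).le
    have hGF : G F = φ g := by
      rw [pi_clm_eq_sum φ g, hF, map_sum]
      exact Finset.sum_congr rfl fun i _ => by rw [map_smul, smul_eq_mul, mul_comm]
    have h1 : G F ≤ ‖G‖ * ‖F‖ := le_trans (le_abs_self _) (by
      rw [← Real.norm_eq_abs]; exact G.le_opNorm F)
    have h2 : ‖G‖ * ‖F‖ ≤ u := by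
      calc ‖G‖ * ‖F‖ ≤ 1 * u := mul_le_mul hG hFnorm (norm_nonneg _) zero_le_one
      _ = u := one_mul u
    rw [hGF] at h1
    linarith
  obtain ⟨v, hvS, hvd⟩ := Metric.mem_closure_iff.mp hg δ hδ
  obtain ⟨y, hy, rfl⟩ := hvS
  refine ⟨y, by simpa [dist_eq_norm] using hy, fun f hf => ?_⟩
  have := dist_le_pi_dist g (T y) ⟨f, hf⟩
  rw [Real.dist_eq] at this
  calc |f y - G f| = |g ⟨f,hf⟩ - T y ⟨f,hf⟩| := by rw [hTapp]; rw [abs_sub_comm]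
  _ ≤ dist g (T y) := this
  _ < δ := hvd

/-- If the bidual `X**` has the w*-DD2P (with respect to `σ(X**, X*)`), then `X` has
the DD2P. -/
theorem dd2p_of_bidual_wstar_dd2p {X : Type*} [NormedAddCommGroup X] [NormedSpace ℝ X]
    [CompleteSpace X]
    (h : WStarDD2P (StrongDual ℝ X)) : DD2P X := by
  classical
  intro V hV x hx hxnorm ε hε
  obtain ⟨hxV, hxB⟩ := hx
  -- the weak embedding
  have hinj : Function.Injective ((topDualPairing ℝ X).flip) := by
    intro a b hab
    rw [NormedSpace.eq_iff_forall_dual_eq (𝕜 := ℝ)]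
    intro f
    exact DFunLike.congr_fun hab f
  have hemb := WeakBilin.isEmbedding (B := (topDualPairing ℝ X).flip) hinj
  obtain ⟨O, hOopen, hOpre⟩ := hemb.toIsInducing.isOpen_iff.mp hV
  have hxO : (fun f : StrongDual ℝ X => f x) ∈ O :=
    (Set.ext_iff.mp hOpre (toWeakSpace ℝ X x)).mpr ⟨x, hxV, rfl⟩
  obtain ⟨I, u, hu, hIpi⟩ := isOpen_pi_iff.mp hOopen _ hxO
  have hδex : ∀ f : StrongDual ℝ X, ∃ δ : ℝ, 0 < δ ∧ (f ∈ I → ball (f x) δ ⊆ u f) := by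
    intro f
    by_cases hf : f ∈ I
    · obtain ⟨δ, hδ, hb⟩ := Metric.isOpen_iff.mp (hu f hf).1 (f x) (hu f hf).2
      exact ⟨δ, hδ, fun _ => hb⟩
    · exact ⟨1, one_pos, fun hf' => absurd hf' hf⟩
  choose δf hδfpos hδfball using hδex
  set d : ℝ := min (ε/4) (if hne : I.Nonempty then I.inf' hne (fun f => δf f / 2) else 1)
    with hd_def
  have hd : 0 < d := by
    refine lt_min (by linarith) ?_
    split
    · rename_i hne
      rw [Finset.lt_inf'_iff]
      intro f _
      have := hδfpos f
      linarith
    · exact one_pos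
  have hdε : d ≤ ε/4 := min_le_left _ _
  have hdf : ∀ f ∈ I, 2*d ≤ δf f := by
    intro f hf
    have h1 : d ≤ I.inf' ⟨f, hf⟩ (fun f => δf f / 2) := by
      have heq : (if hne : I.Nonempty then I.inf' hne (fun f => δf f / 2) else 1)
          = I.inf' ⟨f, hf⟩ (fun f => δf f / 2) := dif_pos ⟨f, hf⟩
      rw [hd_def, heq]
      exact min_le_right _ _
    have h2 : I.inf' ⟨f, hf⟩ (fun f => δf f / 2) ≤ δf f / 2 := Finset.inf'_le _ hf
    linarith
  -- membership criterion for V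
  have hmemV : ∀ y : X, (∀ f ∈ I, |f y - f x| < 2*d) → y ∈ V := by
    intro y hy
    have hyO : (fun f : StrongDual ℝ X => f y) ∈ O := by
      apply hIpi
      intro f hf
      apply hδfball f hf
      rw [mem_ball, Real.dist_eq]
      exact lt_of_lt_of_le (hy f hf) (hdf f hf)
    have himg : toWeakSpace ℝ X y ∈ toWeakSpace ℝ X '' V :=
      (Set.ext_iff.mp hOpre (toWeakSpace ℝ X y)).mp hyO
    obtain ⟨z, hzV, hz⟩ := himg
    rwa [← (toWeakSpace ℝ X).injective hz]
  -- the weak-star open set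
  set W : Set (StrongDual ℝ (StrongDual ℝ X)) := {F | ∀ f ∈ I, |F f - f x| < d} with hW_def
  have hWopen : IsWStarOpen W := by
    unfold IsWStarOpen
    have himg : StrongDual.toWeakDual '' W =
        ⋂ f ∈ I, (fun F : WeakDual ℝ (StrongDual ℝ X) => F f) ⁻¹' (ball (f x) d) := by
      ext F
      simp only [Set.mem_iInter, Set.mem_preimage, mem_ball, Real.dist_eq]
      constructor
      · rintro ⟨G, hG, rfl⟩
        intro f hf
        exact hG f hf
      · intro hF
        exact ⟨F, fun f hf => hF f hf, rfl⟩
    rw [himg]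
    exact isOpen_biInter_finset fun f _ =>
      (WeakDual.eval_continuous f).isOpen_preimage _ isOpen_ball
  -- the image of x in the bidual
  set Jx : StrongDual ℝ (StrongDual ℝ X) := inclusionInDoubleDual ℝ X x with hJx_def
  have hJx_norm : ‖Jx‖ = 1 := by
    have := (inclusionInDoubleDualLi ℝ (E := X)).norm_map x
    rw [hxnorm] at this
    exact this
  have hJxW : Jx ∈ W := by
    intro f _
    show |Jx f - f x| < d
    have hJf : Jx f = f x := rfl
    rw [hJf, sub_self, abs_zero]
    exact hd
  obtain ⟨G, ⟨hGW, hGB⟩, hGfar⟩ :=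
    h W hWopen Jx ⟨hJxW, mem_closedBall_zero_iff.mpr (le_of_eq hJx_norm)⟩ hJx_norm (ε/4)
      (by linarith)
  have hGnorm : ‖G‖ ≤ 1 := mem_closedBall_zero_iff.mp hGB
  -- find a norming functional for Jx - G
  obtain ⟨g0, hg0, hg0far⟩ :=
    ContinuousLinearMap.exists_lt_apply_of_lt_opNorm (Jx - G) hGfar
  set g : StrongDual ℝ X := if 0 ≤ (Jx - G) g0 then g0 else -g0 with hg_def
  have hgnorm : ‖g‖ ≤ 1 := by
    rw [hg_def]; split
    · exact hg0.le
    · rw [norm_neg]; exact hg0.le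
  have hgfar : 2 - ε/4 < (Jx - G) g := by
    rw [hg_def]
    split
    · rename_i h0
      rwa [Real.norm_eq_abs, abs_of_nonneg h0] at hg0far
    · rename_i h0
      rw [map_neg]
      rwa [Real.norm_eq_abs, abs_of_neg (lt_of_not_ge h0)] at hg0far
  -- apply Goldstine
  obtain ⟨y, hy1, hy2⟩ := goldstine_finite G hGnorm (insert g I) hd
  have hyV : y ∈ V := by
    apply hmemV
    intro f hf
    have h1 : |f y - G f| < d := hy2 f (Finset.mem_insert_of_mem hf)
    have h2 : |G f - f x| < d := hGW f hf
    calc |f y - f x| ≤ |f y - G f| + |G f - f x| := abs_sub_le _ _ _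
    _ < 2*d := by linarith
  have hgy : |g y - G g| < d := hy2 g (Finset.mem_insert_self g I)
  have hkey : 2 - ε < g x - g y := by
    have h1 : (Jx - G) g = g x - G g := by
      simp [hJx_def]
    rw [h1] at hgfar
    have := abs_lt.mp hgy
    linarith
  have hfinal : g x - g y ≤ ‖x - y‖ := by
    have h1 : g x - g y ≤ |g x - g y| := le_abs_self _
    have h2 : |g x - g y| ≤ ‖g‖ * ‖x - y‖ := by
      have := g.le_opNorm (x - y)
      rwa [map_sub, Real.norm_eq_abs] at this
    have h3 : ‖g‖ * ‖x - y‖ ≤ 1 * ‖x - y‖ :=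
      mul_le_mul_of_nonneg_right hgnorm (norm_nonneg _)
    linarith
  exact ⟨y, ⟨hyV, mem_closedBall_zero_iff.mpr hy1⟩, lt_of_lt_of_le hkey hfinal⟩
end
end

section
/- A Banach space X has the Daugavet property if and only if for all x, y ∈ S_X there exists a net (y_s) in B_X converging weakly to y such that ‖x - y_s‖ → 2. -/
noncomputable section

open Filter Topology Metric Set NormedSpace

universe u

lemma sum_extend_emb {ι κ M : Type*} [Fintype ι] [Fintype κ] [AddCommMonoid M]
    (e : ι ↪ κ) (g : ι → M) :
    ∑ j, Function.extend e g 0 j = ∑ i, g i := by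
  classical
  have h1 : ∑ j ∈ Finset.univ.image e, Function.extend e g 0 j
      = ∑ j, Function.extend e g 0 j := by
    refine Finset.sum_subset (Finset.subset_univ _) (fun j _ hj => ?_)
    rw [Function.extend_apply' _ _ _ (by simpa [Finset.mem_image] using hj)]
    rfl
  rw [← h1, Finset.sum_image (fun x _ y _ h => e.injective h)]
  exact Finset.sum_congr rfl fun i _ => e.injective.extend_apply _ _ _

lemma isCompact_convexHull_of_isCompact {E : Type*} [NormedAddCommGroup E] [NormedSpace ℝ E]
    [FiniteDimensional ℝ E] {S : Set E} (hS : IsCompact S) : IsCompact (convexHull ℝ S) := by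
  classical
  rcases S.eq_empty_or_nonempty with rfl | ⟨s₀, hs₀⟩
  · simp
  set d := Module.finrank ℝ E + 1 with hd
  set F : (Fin d → ℝ) × (Fin d → E) → E := fun p => ∑ i, p.1 i • p.2 i with hF
  have hFc : Continuous F := by fun_prop
  have hD : IsCompact ((stdSimplex ℝ (Fin d)) ×ˢ (Set.univ.pi fun _ : Fin d => S)) :=
    (isCompact_stdSimplex (𝕜 := ℝ) (ι := Fin d)).prod (isCompact_univ_pi fun _ => hS)
  have himg : convexHull ℝ S
      = F '' ((stdSimplex ℝ (Fin d)) ×ˢ (Set.univ.pi fun _ : Fin d => S)) := by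
    apply Set.Subset.antisymm
    · intro x hx
      obtain ⟨ι, hι, q, w, hqS, hai, hwpos, hw1, hxe⟩ :=
        eq_pos_convex_span_of_mem_convexHull hx
      have hcard : Fintype.card ι ≤ d := by
        refine hai.card_le_finrank_succ.trans ?_
        exact Nat.add_le_add_right (Submodule.finrank_le _) 1
      let e : ι ↪ Fin d :=
        (Fintype.equivFin ι).toEmbedding.trans (Fin.castLEEmb hcard)
      set w' : Fin d → ℝ := Function.extend e w 0 with hw'
      set q' : Fin d → E := Function.extend e q (fun _ => s₀) with hq'
      have hval : ∀ j, w' j • q' j = Function.extend e (fun i => w i • q i) 0 j := by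
        intro j
        by_cases hj : ∃ i, e i = j
        · obtain ⟨i, rfl⟩ := hj
          simp only [hw', hq', e.injective.extend_apply]
        · rw [Function.extend_apply' _ _ _ hj, hw', Function.extend_apply' _ _ _ hj]
          simp
      refine ⟨⟨w', q'⟩, ⟨⟨fun j => ?_, ?_⟩, fun j _ => ?_⟩, ?_⟩
      · show 0 ≤ w' j
        by_cases hj : ∃ i, e i = j
        · obtain ⟨i, rfl⟩ := hj
          rw [hw', e.injective.extend_apply]
          exact (hwpos i).le
        · rw [hw', Function.extend_apply' _ _ _ hj]; rfl
      · show ∑ j, w' j = 1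
        rw [hw', sum_extend_emb e w]; exact hw1
      · show q' j ∈ S
        by_cases hj : ∃ i, e i = j
        · obtain ⟨i, rfl⟩ := hj
          rw [hq', e.injective.extend_apply]
          exact hqS ⟨i, rfl⟩
        · rw [hq', Function.extend_apply' _ _ _ hj]; exact hs₀
      · show F (w', q') = x
        rw [hF]
        simp only
        rw [Finset.sum_congr rfl fun j _ => hval j, sum_extend_emb e _]
        exact hxe
    · rintro _ ⟨⟨w, q⟩, ⟨⟨hw0, hw1⟩, hq⟩, rfl⟩
      have := Finset.univ.centerMass_mem_convexHull (w := w) (z := q)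
        (fun i _ => hw0 i) (by rw [hw1]; norm_num) (fun i _ => hq i (Set.mem_univ i))
      rwa [Finset.centerMass_eq_of_sum_1 _ _ hw1] at this
  rw [himg]
  exact hD.image hFc

open NormedSpace in
lemma slice_of_extreme {X : Type*} [NormedAddCommGroup X] [NormedSpace ℝ X]
    {n : ℕ} (T : X →L[ℝ] (Fin n → ℝ)) {y₀ : X} (hy₀ : ‖y₀‖ = 1)
    {e : Fin n → ℝ} (he : e ∈ (closure (T '' closedBall 0 1)).extremePoints ℝ)
    {δ : ℝ} (hδ : 0 < δ) :
    ∃ (g : StrongDual ℝ X) (α : ℝ), ‖g‖ = 1 ∧ 0 < α ∧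
      ∀ z : X, ‖z‖ ≤ 1 → 1 - α < g z → ‖T z - e‖ < δ := by
  classical
  set K : Set (Fin n → ℝ) := closure (T '' closedBall 0 1) with hK
  have hKconv : Convex ℝ K :=
    ((convex_closedBall (0 : X) 1).linear_image (T : X →ₗ[ℝ] (Fin n → ℝ))).closure
  have hKsub : ∀ z : X, ‖z‖ ≤ 1 → T z ∈ K := fun z hz =>
    subset_closure ⟨z, mem_closedBall_zero_iff.2 hz, rfl⟩
  set U : Set (Fin n → ℝ) := ball e δ with hU
  by_cases hems : K \ U = ∅
  · obtain ⟨g, hg1, -⟩ := exists_dual_vector ℝ y₀ (by rw [← norm_ne_zero_iff, hy₀]; norm_num)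
    refine ⟨g, 1, hg1, one_pos, fun z hz _ => ?_⟩
    have : T z ∈ U := by
      have := hKsub z hz
      rcases (em (T z ∈ U)) with h | h
      · exact h
      · exact absurd (Set.mem_diff_of_mem this h) (by simp [hems])
    simpa [hU, mem_ball_iff_norm, dist_eq_norm] using this
  · have hSne : (K \ U).Nonempty := Set.nonempty_iff_ne_empty.2 hems
    have hKb : Bornology.IsBounded K := by
      have : K ⊆ closedBall 0 ‖T‖ := by
        refine closure_minimal ?_ Metric.isClosed_closedBall
        rintro _ ⟨z, hz, rfl⟩
        rw [mem_closedBall_zero_iff] at hz ⊢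
        calc ‖T z‖ ≤ ‖T‖ * ‖z‖ := T.le_opNorm z
        _ ≤ ‖T‖ * 1 := by gcongr
        _ = ‖T‖ := mul_one _
      exact (isBounded_closedBall).subset this
    have hKcomp : IsCompact K :=
      (Metric.isCompact_of_isClosed_isBounded isClosed_closure hKb)
    have hScomp : IsCompact (K \ U) :=
      hKcomp.of_isClosed_subset (isClosed_closure.sdiff isOpen_ball) diff_subset
    set C : Set (Fin n → ℝ) := convexHull ℝ (K \ U) with hC
    have hCcomp : IsCompact C := isCompact_convexHull_of_isCompact hScomp
    have hCK : C ⊆ K := convexHull_min diff_subset hKconv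
    have heC : e ∉ C := by
      intro heC
      have he' : e ∈ C.extremePoints ℝ := by
        rw [mem_extremePoints] at he ⊢
        obtain ⟨heK, hfact⟩ := he
        exact ⟨heC, fun x₁ hx₁ x₂ hx₂ hseg => hfact x₁ (hCK hx₁) x₂ (hCK hx₂) hseg⟩
      have : e ∈ K \ U := extremePoints_convexHull_subset he'
      exact this.2 (mem_ball_self hδ)
    obtain ⟨φ, c, hφC, hce⟩ :=
      geometric_hahn_banach_closed_point (convex_convexHull ℝ _) hCcomp.isClosed heC
    set g₀ : StrongDual ℝ X := φ.comp T with hg₀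
    set M : ℝ := ‖g₀‖ with hM
    have hKle : ∀ k ∈ K, φ k ≤ M := by
      intro k hk
      have : K ⊆ {k | φ k ≤ M} := by
        refine closure_minimal ?_ (isClosed_le φ.continuous continuous_const)
        rintro _ ⟨z, hz, rfl⟩
        have : φ (T z) ≤ ‖g₀‖ * ‖z‖ := (le_abs_self _).trans (g₀.le_opNorm z)
        rw [mem_closedBall_zero_iff] at hz
        calc φ (T z) ≤ ‖g₀‖ * ‖z‖ := this
        _ ≤ ‖g₀‖ * 1 := by gcongr
        _ = M := mul_one _
      exact this hk
    have hcM : c < M := lt_of_lt_of_le hce (hKle e he.1)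
    have hM0 : 0 < M := by
      rcases hSne with ⟨a, ha⟩
      have haC : a ∈ C := subset_convexHull ℝ _ ha
      rcases lt_or_eq_of_le (norm_nonneg g₀) with h | h
      · exact h
      · exfalso
        have hg0 : g₀ = 0 := by rwa [eq_comm, norm_eq_zero] at h
        have hφK : ∀ k ∈ K, φ k = 0 := by
          intro k hk
          have : K ⊆ {k | φ k = 0} := by
            refine closure_minimal ?_ (isClosed_eq φ.continuous continuous_const)
            rintro _ ⟨z, hz, rfl⟩
            show φ (T z) = 0
            have : g₀ z = 0 := by rw [hg0]; rfl
            exact this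
          exact this hk
        have h1 : φ a = 0 := hφK a (hCK haC)
        have h2 : φ e = 0 := hφK e he.1
        have := hφC a haC
        rw [h1] at this
        rw [h2] at hce
        linarith
    refine ⟨M⁻¹ • g₀, (M - c) / M, ?_, div_pos (by linarith) hM0, fun z hz hgz => ?_⟩
    · rw [norm_smul, norm_inv, Real.norm_eq_abs, abs_of_pos hM0, ← hM, inv_mul_cancel₀ hM0.ne']
    · have hgz' : c < g₀ z := by
        have : (M⁻¹ • g₀) z = M⁻¹ * g₀ z := rfl
        rw [this] at hgz
        have h1 : 1 - (M - c) / M = c / M := by field_simp; ring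
        rw [h1] at hgz
        have h2 : c / M < g₀ z / M := by
          rw [div_eq_inv_mul c M, div_eq_inv_mul (g₀ z) M]
          rwa [div_eq_inv_mul c M] at hgz
        exact (div_lt_div_iff_of_pos_right hM0).1 h2
      have hTz : T z ∈ K := hKsub z hz
      by_contra hnear
      have : T z ∈ K \ U := ⟨hTz, fun hmem => hnear (by rwa [hU, mem_ball_iff_norm] at hmem)⟩
      have := hφC (T z) (subset_convexHull ℝ _ this)
      have : φ (T z) < c := this
      exact absurd hgz' (by simpa [hg₀] using this.not_gt)

open NormedSpace in
set_option maxHeartbeats 1000000 in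
lemma comb_lemma {X : Type*} [NormedAddCommGroup X] [NormedSpace ℝ X]
    (h : ∀ x : X, ‖x‖ = 1 → ∀ ε > (0 : ℝ), ∀ f : StrongDual ℝ X, ‖f‖ = 1 →
        ∀ α > (0 : ℝ), ∃ y ∈ Slice f α, 2 - ε < ‖x + y‖)
    (x : X) (hx : ‖x‖ = 1) {m : ℕ} (w : Fin m → ℝ) (hw : ∀ i, 0 ≤ w i)
    (hw1 : ∑ i, w i = 1) (g : Fin m → StrongDual ℝ X) (hg : ∀ i, ‖g i‖ = 1)
    (α : Fin m → ℝ) (hα : ∀ i, 0 < α i) {ε : ℝ} (hε : 0 < ε) :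
    ∃ z : Fin m → X, (∀ i, ‖z i‖ ≤ 1 ∧ 1 - α i < (g i) (z i)) ∧
      2 - ε < ‖x - ∑ i, w i • z i‖ := by
  classical
  set ε' : ℝ := min ε 1 / 3 ^ m with hε'def
  have h3m : (0:ℝ) < 3 ^ m := by positivity
  have hε'pos : 0 < ε' := by
    apply div_pos (lt_min hε one_pos) h3m
  have hme : (min ε 1) ≤ 1 := min_le_right _ _
  set δf : ℕ → ℝ := fun k => ((3:ℝ) ^ k - 1) * ε' with hδf
  have hδmono : ∀ k, k ≤ m → δf k ≤ δf m := by
    intro k hk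
    have : (3:ℝ) ^ k ≤ 3 ^ m := pow_le_pow_right₀ (by norm_num) hk
    have := hε'pos.le
    simp only [hδf]
    nlinarith
  have hδm : δf m < min ε 1 := by
    simp only [hδf, hε'def]
    rw [div_eq_inv_mul, ← mul_assoc]
    have h1 : ((3:ℝ) ^ m - 1) * (3 ^ m)⁻¹ < 1 := by
      rw [mul_inv_lt_iff₀ h3m]; linarith
    nlinarith [lt_min hε one_pos]
  have hδnn : ∀ k, 0 ≤ δf k := by
    intro k
    have : (1:ℝ) ≤ 3 ^ k := one_le_pow₀ (by norm_num)
    simp only [hδf]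
    nlinarith [hε'pos.le]
  -- filtered index sets
  set filt : ℕ → Finset (Fin m) := fun k => Finset.univ.filter (fun i : Fin m => (i : ℕ) < k)
    with hfilt
  have main : ∀ k, k ≤ m → ∃ z : Fin m → X,
      (∀ i, ‖z i‖ ≤ 1 ∧ 1 - α i < (g i) (z i)) ∧
      1 + (∑ i ∈ filt k, w i) - δf k ≤ ‖x - ∑ i ∈ filt k, w i • z i‖ := by
    intro k
    induction k with
    | zero =>
      intro _
      have hz0 : ∀ i, ∃ u : X, ‖u‖ ≤ 1 ∧ 1 - α i < (g i) u := by
        intro i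
        obtain ⟨u, huS, -⟩ := h x hx 1 one_pos (g i) (hg i) (α i) (hα i)
        obtain ⟨hu1, hu2⟩ := huS
        exact ⟨u, mem_closedBall_zero_iff.1 hu1, by rwa [hg i] at hu2⟩
      choose z0 hz0' using hz0
      refine ⟨z0, hz0', ?_⟩
      have : filt 0 = ∅ := by
        ext i; simp [hfilt]
      rw [this]
      simp only [Finset.sum_empty, sub_zero, hx]
      have := hδnn 0
      linarith
    | succ k IH =>
      intro hk1
      have hkm : k < m := hk1
      obtain ⟨z, hzc, hzn⟩ := IH hkm.le
      set ik : Fin m := ⟨k, hkm⟩ with hik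
      set sk : ℝ := ∑ i ∈ filt k, w i with hsk
      set v : X := x - ∑ i ∈ filt k, w i • z i with hv
      set r : ℝ := ‖v‖ with hr
      have hsknn : 0 ≤ sk := Finset.sum_nonneg fun i _ => hw i
      have hsk1 : sk + w ik ≤ 1 := by
        have hins : filt (k+1) = insert ik (filt k) := by
          ext i
          simp only [hfilt, Finset.mem_filter, Finset.mem_univ, true_and, Finset.mem_insert,
            hik, Fin.ext_iff]
          omega
        have hnm : ik ∉ filt k := by simp [hfilt, hik]
        have : ∑ i ∈ filt (k+1), w i = w ik + sk := by
          rw [hins, Finset.sum_insert hnm, hsk]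
        have hle : ∑ i ∈ filt (k+1), w i ≤ ∑ i, w i :=
          Finset.sum_le_sum_of_subset_of_nonneg (Finset.subset_univ _) (fun i _ _ => hw i)
        rw [hw1] at hle
        linarith [this ▸ hle]
      have hrlow : 1 + sk - δf k ≤ r := hzn
      have hrpos : 0 < r := by
        have := hδmono k hkm.le
        have := hδm
        linarith
      have hrup : r ≤ 1 + sk := by
        have h1 : ‖∑ i ∈ filt k, w i • z i‖ ≤ sk := by
          refine (norm_sum_le _ _).trans ?_
          rw [hsk]
          refine Finset.sum_le_sum fun i _ => ?_
          rw [norm_smul, Real.norm_eq_abs, abs_of_nonneg (hw i)]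
          exact mul_le_of_le_one_right (hw i) (hzc i).1
        calc r ≤ ‖x‖ + ‖∑ i ∈ filt k, w i • z i‖ := norm_sub_le _ _
        _ ≤ 1 + sk := by rw [hx]; linarith
      set x' : X := -(r⁻¹ • v) with hx'def
      have hx' : ‖x'‖ = 1 := by
        rw [hx'def, norm_neg, norm_smul, norm_inv, Real.norm_eq_abs, abs_of_pos hrpos,
          ← hr, inv_mul_cancel₀ hrpos.ne']
      obtain ⟨u, huS, hu2⟩ := h x' hx' ε' hε'pos (g ik) (hg ik) (α ik) (hα ik)
      obtain ⟨hu1', huα⟩ := huS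
      have hu1 : ‖u‖ ≤ 1 := mem_closedBall_zero_iff.1 hu1'
      rw [hg ik] at huα
      have hu2' : 2 - ε' < ‖u - r⁻¹ • v‖ := by
        have : x' + u = u - r⁻¹ • v := by rw [hx'def]; abel
        rwa [this] at hu2
      set z' : Fin m → X := Function.update z ik u with hz'
      have hins : filt (k+1) = insert ik (filt k) := by
        ext i
        simp only [hfilt, Finset.mem_filter, Finset.mem_univ, true_and, Finset.mem_insert,
          hik, Fin.ext_iff]
        omega
      have hnm : ik ∉ filt k := by simp [hfilt, hik]
      have hsum' : ∑ i ∈ filt (k+1), w i • z' i = w ik • u + ∑ i ∈ filt k, w i • z i := by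
        rw [hins, Finset.sum_insert hnm]
        congr 1
        · rw [hz', Function.update_self]
        · refine Finset.sum_congr rfl fun i hi => ?_
          rw [hz', Function.update_of_ne]
          intro hcon
          rw [hcon] at hi
          exact hnm hi
      refine ⟨z', fun i => ?_, ?_⟩
      · rcases eq_or_ne i ik with rfl | hne
        · rw [hz', Function.update_self]; exact ⟨hu1, huα⟩
        · rw [hz', Function.update_of_ne hne]; exact hzc i
      · -- the norm estimate
        set c : ℝ := w ik with hc
        have hc0 : 0 ≤ c := hw ik
        have hgoal : x - ∑ i ∈ filt (k+1), w i • z' i = v - c • u := by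
          rw [hsum', hv]; abel
        rw [hgoal]
        have hAB : v - c • u = r • (r⁻¹ • v - u) + (r - c) • u := by
          rw [smul_sub, smul_smul, mul_inv_cancel₀ hrpos.ne', one_smul, sub_smul]
          abel
        have hA : ‖r • (r⁻¹ • v - u)‖ = r * ‖r⁻¹ • v - u‖ := by
          rw [norm_smul, Real.norm_eq_abs, abs_of_pos hrpos]
        have hB : ‖(r - c) • u‖ ≤ |r - c| := by
          rw [norm_smul, Real.norm_eq_abs]
          exact mul_le_of_le_one_right (abs_nonneg _) hu1
        have hlower : r * (2 - ε') - |r - c| ≤ ‖v - c • u‖ := by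
          rw [hAB]
          have h1 : ‖r • (r⁻¹ • v - u)‖ - ‖-((r - c) • u)‖
              ≤ ‖r • (r⁻¹ • v - u) - -((r - c) • u)‖ := norm_sub_norm_le _ _
          rw [sub_neg_eq_add, norm_neg] at h1
          have h2 : r * (2 - ε') ≤ r * ‖r⁻¹ • v - u‖ := by
            have := hu2'
            rw [norm_sub_rev] at this
            nlinarith
          linarith [hA ▸ h1, hB]
        have hδs : δf (k+1) = 3 * δf k + 2 * ε' := by
          simp only [hδf]; rw [pow_succ]; ring
        have hε'le : ε' ≤ 1 := by
          have h31 : (1:ℝ) ≤ 3 ^ m := one_le_pow₀ (by norm_num)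
          rw [hε'def, div_le_one h3m]
          exact hme.trans h31
        have hks : ∑ i ∈ filt (k+1), w i = c + sk := by
          rw [hins, Finset.sum_insert hnm, hsk, hc]
        rw [hks]
        have hδk1 : δf k < 1 := lt_of_le_of_lt (hδmono k hkm.le) (lt_of_lt_of_le hδm hme)
        rcases le_or_gt c r with hcr | hcr
        · rw [abs_of_nonneg (by linarith)] at hlower
          nlinarith [mul_nonneg (by linarith : (0:ℝ) ≤ 1 - ε')
            (by linarith : (0:ℝ) ≤ r - (1 + sk - δf k)), hδnn k, hsknn, hsk1, hε'pos.le]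
        · rw [abs_of_neg (by linarith)] at hlower
          nlinarith [mul_nonneg (by linarith : (0:ℝ) ≤ 3 - ε')
            (by linarith : (0:ℝ) ≤ r - (1 + sk - δf k)), hδnn k, hsknn, hsk1, hε'pos.le]
  obtain ⟨z, hzc, hzn⟩ := main m le_rfl
  have hfm : filt m = Finset.univ := by
    ext i; simp [hfilt, i.isLt]
  rw [hfm, hw1] at hzn
  refine ⟨z, hzc, ?_⟩
  have hδε : δf m < ε := lt_of_lt_of_le hδm (min_le_left _ _)
  linarith

open NormedSpace in
set_option maxHeartbeats 1000000 in
lemma key_lemma {X : Type*} [NormedAddCommGroup X] [NormedSpace ℝ X]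
    (h : ∀ x : X, ‖x‖ = 1 → ∀ ε > (0 : ℝ), ∀ f : StrongDual ℝ X, ‖f‖ = 1 →
        ∀ α > (0 : ℝ), ∃ y ∈ Slice f α, 2 - ε < ‖x + y‖)
    (x y : X) (hx : ‖x‖ = 1) (hy : ‖y‖ = 1) {ε δ : ℝ} (hε : 0 < ε) (hδ : 0 < δ)
    (n : ℕ) (f : Fin n → StrongDual ℝ X) :
    ∃ z : X, ‖z‖ ≤ 1 ∧ (∀ i, |f i z - f i y| < δ) ∧ 2 - ε < ‖x - z‖ := by
  classical
  set T : X →L[ℝ] (Fin n → ℝ) := ContinuousLinearMap.pi f with hT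
  set K : Set (Fin n → ℝ) := closure (T '' closedBall 0 1) with hK
  have hKconv : Convex ℝ K :=
    ((convex_closedBall (0 : X) 1).linear_image (T : X →ₗ[ℝ] (Fin n → ℝ))).closure
  have hKb : Bornology.IsBounded K := by
    have : K ⊆ closedBall 0 ‖T‖ := by
      refine closure_minimal ?_ Metric.isClosed_closedBall
      rintro _ ⟨z, hz, rfl⟩
      rw [mem_closedBall_zero_iff] at hz ⊢
      calc ‖T z‖ ≤ ‖T‖ * ‖z‖ := T.le_opNorm z
      _ ≤ ‖T‖ * 1 := by gcongr
      _ = ‖T‖ := mul_one _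
    exact (isBounded_closedBall).subset this
  have hKcomp : IsCompact K := Metric.isCompact_of_isClosed_isBounded isClosed_closure hKb
  have hTy : T y ∈ K :=
    subset_closure ⟨y, mem_closedBall_zero_iff.2 hy.le, rfl⟩
  have hKM : closure (convexHull ℝ (K.extremePoints ℝ)) = K :=
    closure_convexHull_extremePoints hKcomp hKconv
  -- find a nearby finite convex combination of extreme points
  have hTy' : T y ∈ closure (convexHull ℝ (K.extremePoints ℝ)) := by rw [hKM]; exact hTy
  obtain ⟨p', hp'mem, hp'dist⟩ := Metric.mem_closure_iff.1 hTy' (δ / 4) (by linarith)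
  obtain ⟨ι, hι, q, lam, hqmem, -, hlampos, hlam1, hrep⟩ :=
    eq_pos_convex_span_of_mem_convexHull hp'mem
  set m : ℕ := Fintype.card ι with hm
  set eqv : ι ≃ Fin m := Fintype.equivFin ι with heqv
  set q' : Fin m → (Fin n → ℝ) := q ∘ eqv.symm with hq'
  set w' : Fin m → ℝ := lam ∘ eqv.symm with hw'
  have hw'nn : ∀ j, 0 ≤ w' j := fun j => (hlampos _).le
  have hw'1 : ∑ j, w' j = 1 := by
    simp only [hw', Function.comp_apply]
    exact (Equiv.sum_comp eqv.symm lam).trans hlam1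
  have hrep' : ∑ j, w' j • q' j = p' := by
    simp only [hw', hq', Function.comp_apply]
    exact (Equiv.sum_comp eqv.symm (fun i => lam i • q i)).trans hrep
  -- slices around each extreme point
  have hsl : ∀ j : Fin m, ∃ (g : StrongDual ℝ X) (α : ℝ), ‖g‖ = 1 ∧ 0 < α ∧
      ∀ z : X, ‖z‖ ≤ 1 → 1 - α < g z → ‖T z - q' j‖ < δ / 4 := by
    intro j
    refine slice_of_extreme T hy ?_ (by linarith : (0:ℝ) < δ / 4)
    exact hqmem ⟨eqv.symm j, rfl⟩
  choose g α hg hα hslice using hsl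
  obtain ⟨z, hzc, hzn⟩ := comb_lemma h x hx w' hw'nn hw'1 g hg α hα hε
  set zz : X := ∑ j, w' j • z j with hzz
  have hzz1 : ‖zz‖ ≤ 1 := by
    calc ‖zz‖ ≤ ∑ j, ‖w' j • z j‖ := norm_sum_le _ _
    _ ≤ ∑ j, w' j := by
        refine Finset.sum_le_sum fun j _ => ?_
        rw [norm_smul, Real.norm_eq_abs, abs_of_nonneg (hw'nn j)]
        exact mul_le_of_le_one_right (hw'nn j) (hzc j).1
    _ = 1 := hw'1
  have hTzz : ‖T zz - T y‖ < δ := by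
    have h1 : T zz - T y = (∑ j, w' j • (T (z j) - q' j)) + (p' - T y) := by
      have : T zz = ∑ j, w' j • T (z j) := by
        rw [hzz, map_sum]
        exact Finset.sum_congr rfl fun j _ => by rw [map_smul]
      rw [this, ← hrep']
      simp only [smul_sub, Finset.sum_sub_distrib]
      abel
    have h2 : ‖∑ j, w' j • (T (z j) - q' j)‖ ≤ δ / 4 := by
      calc ‖∑ j, w' j • (T (z j) - q' j)‖ ≤ ∑ j, ‖w' j • (T (z j) - q' j)‖ := norm_sum_le _ _
      _ ≤ ∑ j, w' j * (δ / 4) := by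
          refine Finset.sum_le_sum fun j _ => ?_
          rw [norm_smul, Real.norm_eq_abs, abs_of_nonneg (hw'nn j)]
          exact mul_le_mul_of_nonneg_left
            (hslice j (z j) (hzc j).1 (hzc j).2).le (hw'nn j)
      _ = δ / 4 := by rw [← Finset.sum_mul, hw'1, one_mul]
    have h3 : ‖p' - T y‖ < δ / 4 := by
      rw [← dist_eq_norm, dist_comm]
      exact hp'dist
    calc ‖T zz - T y‖ ≤ ‖∑ j, w' j • (T (z j) - q' j)‖ + ‖p' - T y‖ := by
          rw [h1]; exact norm_add_le _ _
    _ < δ / 4 + δ / 4 := by linarith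
    _ ≤ δ := by linarith
  refine ⟨zz, hzz1, fun i => ?_, hzn⟩
  have : |(T zz - T y) i| ≤ ‖T zz - T y‖ := by
    have := norm_le_pi_norm (T zz - T y) i
    simpa [Real.norm_eq_abs] using this
  have hcoord : (T zz - T y) i = f i zz - f i y := by
    simp [hT, ContinuousLinearMap.pi_apply]
  rw [hcoord] at this
  linarith
/-- A Banach space has the Daugavet property iff for all norm-one `x, y` there is a net in the
unit ball converging weakly to `y` whose distance to `x` tends to `2`. -/
theorem daugavet_iff_nets {X : Type u} [NormedAddCommGroup X] [NormedSpace ℝ X]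
    [CompleteSpace X] :
    (∀ x : X, ‖x‖ = 1 → ∀ ε > (0 : ℝ), ∀ f : StrongDual ℝ X, ‖f‖ = 1 →
        ∀ α > (0 : ℝ), ∃ y ∈ Slice f α, 2 - ε < ‖x + y‖) ↔
      (∀ x y : X, ‖x‖ = 1 → ‖y‖ = 1 →
        ∃ (ι : Type u) (l : Filter ι) (ys : ι → X), l.NeBot ∧
          (∀ s, ys s ∈ closedBall (0 : X) 1) ∧
          (∀ f : StrongDual ℝ X, Tendsto (fun s => f (ys s)) l (𝓝 (f y))) ∧
          Tendsto (fun s => ‖x - ys s‖) l (𝓝 2)) := by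
  constructor
  · -- Daugavet ⟹ nets
    intro h x y hx hy
    classical
    have H : ∀ s : Finset (StrongDual ℝ X) × ℕ, ∃ z : X, ‖z‖ ≤ 1 ∧
        (∀ f ∈ s.1, |f z - f y| < 1 / (s.2 + 1)) ∧ 2 - 1 / (s.2 + 1) < ‖x - z‖ := by
      intro s
      have hpos : (0:ℝ) < 1 / (s.2 + 1) := by positivity
      obtain ⟨z, h1, h2, h3⟩ := key_lemma h x y hx hy hpos hpos s.1.card
        (fun i => (s.1.equivFin.symm i : StrongDual ℝ X))
      refine ⟨z, h1, fun f hf => ?_, h3⟩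
      have := h2 (s.1.equivFin ⟨f, hf⟩)
      simpa using this
    choose ys hys1 hys2 hys3 using H
    haveI : IsDirected (Finset (StrongDual ℝ X) × ℕ) (· ≤ ·) :=
      ⟨fun a b => ⟨(a.1 ∪ b.1, max a.2 b.2),
        ⟨Finset.le_iff_subset.2 Finset.subset_union_left, le_max_left _ _⟩,
        ⟨Finset.le_iff_subset.2 Finset.subset_union_right, le_max_right _ _⟩⟩⟩
    refine ⟨Finset (StrongDual ℝ X) × ℕ, atTop, ys, atTop_neBot,
      fun s => mem_closedBall_zero_iff.2 (hys1 s), ?_, ?_⟩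
    · intro f
      rw [Metric.tendsto_nhds]
      intro η hη
      obtain ⟨N, hN⟩ := exists_nat_one_div_lt hη
      filter_upwards [Filter.eventually_ge_atTop (({f} : Finset (StrongDual ℝ X)), N)] with s hs
      have hf : f ∈ s.1 := hs.1 (Finset.mem_singleton_self f)
      have hlt := hys2 s f hf
      have hmon : 1 / ((s.2:ℝ) + 1) ≤ 1 / ((N:ℝ) + 1) := by
        apply one_div_le_one_div_of_le (by positivity)
        have : (N:ℝ) ≤ s.2 := Nat.cast_le.2 hs.2
        linarith
      rw [Real.dist_eq]
      calc |f (ys s) - f y| < 1 / (s.2 + 1) := hlt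
      _ ≤ 1 / (N + 1) := hmon
      _ < η := hN
    · rw [Metric.tendsto_nhds]
      intro η hη
      obtain ⟨N, hN⟩ := exists_nat_one_div_lt hη
      filter_upwards [Filter.eventually_ge_atTop ((∅ : Finset (StrongDual ℝ X)), N)] with s hs
      have h3 := hys3 s
      have hup : ‖x - ys s‖ ≤ 2 := by
        calc ‖x - ys s‖ ≤ ‖x‖ + ‖ys s‖ := norm_sub_le _ _
        _ ≤ 2 := by rw [hx]; linarith [hys1 s]
      have hmon : 1 / ((s.2:ℝ) + 1) ≤ 1 / ((N:ℝ) + 1) := by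
        apply one_div_le_one_div_of_le (by positivity)
        have : (N:ℝ) ≤ s.2 := Nat.cast_le.2 hs.2
        linarith
      rw [Real.dist_eq, abs_lt]
      constructor <;> linarith
  · -- nets ⟹ Daugavet
    intro h x hx ε hε f hf α hα
    set γ : ℝ := min α 1 / 2 with hγdef
    have hγpos : 0 < γ := by positivity
    have hγle : γ ≤ 1 / 2 := by
      rw [hγdef]
      have := min_le_right α 1
      linarith
    have hγα : γ < α := by
      rw [hγdef]
      have := min_le_left α 1
      linarith [min_le_left α 1, hα]
    obtain ⟨w, hw1, hw2⟩ := f.exists_lt_apply_of_lt_opNorm (r := 1 - γ) (by rw [hf]; linarith)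
    have hwex : ∃ w' : X, ‖w'‖ < 1 ∧ 1 - γ < f w' := by
      rcases le_or_gt 0 (f w) with hfw | hfw
      · exact ⟨w, hw1, by rwa [Real.norm_eq_abs, abs_of_nonneg hfw] at hw2⟩
      · refine ⟨-w, by rwa [norm_neg], ?_⟩
        rw [map_neg]
        rwa [Real.norm_eq_abs, abs_of_neg hfw] at hw2
    obtain ⟨w', hw'1, hw'2⟩ := hwex
    have hfw'pos : 0 < f w' := by linarith
    have hw'ne : (0:ℝ) < ‖w'‖ := by
      rw [norm_pos_iff]
      intro hc
      rw [hc, map_zero] at hfw'pos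
      exact lt_irrefl _ hfw'pos
    set y : X := ‖w'‖⁻¹ • w' with hydef
    have hy : ‖y‖ = 1 := by
      rw [hydef, norm_smul, norm_inv, norm_norm, inv_mul_cancel₀ hw'ne.ne']
    have hfy : 1 - γ < f y := by
      have h1 : f y = ‖w'‖⁻¹ * f w' := by rw [hydef, map_smul]; rfl
      have h2 : (1:ℝ) ≤ ‖w'‖⁻¹ := by
        rw [le_inv_comm₀ one_pos hw'ne]
        · simpa using hw'1.le
      have h3 : f w' ≤ ‖w'‖⁻¹ * f w' := le_mul_of_one_le_left hfw'pos.le h2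
      rw [h1]
      linarith
    obtain ⟨ι, l, ys, hne, hball, hweak, hnorm⟩ := h (-x) y (by rwa [norm_neg]) hy
    have E1 : ∀ᶠ s in l, ‖f‖ - α < f (ys s) := by
      have hgap : (0:ℝ) < f y - (1 - α) := by linarith
      have hw := hweak f
      rw [Metric.tendsto_nhds] at hw
      filter_upwards [hw _ hgap] with s hs
      rw [Real.dist_eq, abs_lt] at hs
      rw [hf]
      linarith [hs.1]
    have E2 : ∀ᶠ s in l, 2 - ε < ‖x + ys s‖ := by
      have h2 : ∀ s, ‖-x - ys s‖ = ‖x + ys s‖ := fun s => by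
        rw [← norm_neg]
        congr 1
        abel
      filter_upwards [hnorm (Ioi_mem_nhds (show (2:ℝ) - ε < 2 by linarith))] with s hs
      rw [← h2 s]
      exact hs
    obtain ⟨s, hs1, hs2⟩ := (E1.and E2).exists
    exact ⟨ys s, ⟨hball s, hs1⟩, hs2⟩
end
end

section
/- Let X and Y be Banach spaces with the DD2P and let 1 ≤ p ≤ ∞. Then X ⊕_p Y has the DD2P. -/
noncomputable section

open Filter Topology Metric Set NormedSpace ENNReal

section DD2PAux

variable {X' : Type*} [NormedAddCommGroup X'] [NormedSpace ℝ X']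

lemma isWeaklyOpen_strips {ι : Type*} (S : Finset ι) (g : ι → StrongDual ℝ X')
    (c : ι → ℝ) (α : ℝ) :
    IsWeaklyOpen X' {u : X' | ∀ i ∈ S, |g i u - c i| < α} := by
  have : toWeakSpace ℝ X' '' {u : X' | ∀ i ∈ S, |g i u - c i| < α}
      = ⋂ i ∈ S, (fun w : WeakSpace ℝ X' => (topDualPairing ℝ X').flip w (g i)) ⁻¹'
          (ball (c i) α) := by
    ext w
    simp only [Set.mem_iInter, mem_preimage, mem_ball, Real.dist_eq]
    constructor
    · rintro ⟨u, hu, rfl⟩; exact hu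
    · intro h; exact ⟨(toWeakSpace ℝ X').symm w, h, rfl⟩
  rw [IsWeaklyOpen, this]
  exact isOpen_biInter_finset fun i _ =>
    (isOpen_ball).preimage (WeakBilin.eval_continuous _ (g i))

lemma exists_basic_nbhd {V : Set X'} (hV : IsWeaklyOpen X' V) {z : X'} (hz : z ∈ V) :
    ∃ (S : Finset (StrongDual ℝ X')) (α : ℝ), 0 < α ∧
      {w : X' | ∀ f ∈ S, |f w - f z| < α} ⊆ V := by
  have hzV : toWeakSpace ℝ X' z ∈ toWeakSpace ℝ X' '' V := ⟨z, hz, rfl⟩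
  have hmem : toWeakSpace ℝ X' '' V ∈ nhds (toWeakSpace ℝ X' z) := hV.mem_nhds hzV
  change _ ∈ @nhds _ (TopologicalSpace.induced (fun (x : WeakSpace ℝ X') (f : StrongDual ℝ X') =>
      (topDualPairing ℝ X').flip x f) Pi.topologicalSpace) _ at hmem
  rw [nhds_induced (fun (x : WeakSpace ℝ X') (f : StrongDual ℝ X') =>
      (topDualPairing ℝ X').flip x f), Filter.mem_comap] at hmem
  obtain ⟨O, hO, hOsub⟩ := hmem
  rw [nhds_pi, Filter.mem_pi] at hO
  obtain ⟨I, hIfin, t, ht, htsub⟩ := hO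
  choose δ hδpos hδsub using fun f : StrongDual ℝ X' => Metric.mem_nhds_iff.mp (ht f)
  classical
  set S := hIfin.toFinset with hS
  refine ⟨S, if h : S.Nonempty then S.inf' h δ else 1, ?_, ?_⟩
  · split_ifs with h
    · exact (Finset.lt_inf'_iff h).mpr fun f _ => hδpos f
    · exact one_pos
  · intro w hw
    have : (fun f : StrongDual ℝ X' =>
        (topDualPairing ℝ X').flip (toWeakSpace ℝ X' w) f) ∈ I.pi t := by
      intro f hf
      have hfS : f ∈ S := hIfin.mem_toFinset.mpr hf
      have hne : S.Nonempty := ⟨f, hfS⟩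
      apply hδsub f
      rw [mem_ball, Real.dist_eq]
      calc |f w - f z| < S.inf' hne δ := by simpa [dif_pos hne] using hw f hfS
        _ ≤ δ f := Finset.inf'_le δ hfS
    have := hOsub (htsub this)
    obtain ⟨u, hu, huw⟩ := this
    rwa [(toWeakSpace ℝ X').injective huw] at hu

lemma dd2p_key {ι : Type*} (hX : DD2P X') (S : Finset ι) (g : ι → StrongDual ℝ X')
    (x : X') {α δ : ℝ} (hα : 0 < α) (hδ : 0 < δ) :
    ∃ u : X', ‖u‖ ≤ 1 ∧ (∀ i ∈ S, |g i (‖x‖ • u) - g i x| < α) ∧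
      ‖x‖ * (2 - δ) ≤ ‖x - ‖x‖ • u‖ := by
  by_cases hx : x = 0
  · exact ⟨0, by simp, fun i _ => by simp [hx, hα], by simp [hx]⟩
  · have ha : (0 : ℝ) < ‖x‖ := norm_pos_iff.mpr hx
    set U : Set X' := {u : X' | ∀ i ∈ S, |g i (‖x‖ • u) - g i x| < α} with hU
    have hUopen : IsWeaklyOpen X' U := by
      have : U = {u : X' | ∀ i ∈ S, |(‖x‖ • g i) u - g i x| < α} := by
        ext u; simp [hU, map_smul, smul_eq_mul]
      rw [this]; exact isWeaklyOpen_strips S _ _ _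
    have hx₀ : ‖(‖x‖⁻¹ • x)‖ = 1 := by
      rw [norm_smul, norm_inv, norm_norm, inv_mul_cancel₀ ha.ne']
    have hx₀U : ‖x‖⁻¹ • x ∈ U := by
      intro i _
      rw [smul_smul, mul_inv_cancel₀ ha.ne', one_smul]
      simpa using hα
    obtain ⟨u, ⟨huU, huB⟩, hud⟩ := hX U hUopen (‖x‖⁻¹ • x)
      ⟨hx₀U, mem_closedBall_zero_iff.mpr hx₀.le⟩ hx₀ δ hδ
    refine ⟨u, mem_closedBall_zero_iff.mp huB, huU, ?_⟩
    have : x - ‖x‖ • u = ‖x‖ • (‖x‖⁻¹ • x - u) := by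
      rw [smul_sub, smul_smul, mul_inv_cancel₀ ha.ne', one_smul]
    rw [this, norm_smul, norm_norm]
    exact mul_le_mul_of_nonneg_left hud.le ha.le

lemma prod_norm_mono {p : ℝ≥0∞} [Fact (1 ≤ p)] {A B : Type*} [NormedAddCommGroup A]
    [NormedAddCommGroup B] (w z : WithLp p (A × B)) (h1 : ‖w.fst‖ ≤ ‖z.fst‖)
    (h2 : ‖w.snd‖ ≤ ‖z.snd‖) : ‖w‖ ≤ ‖z‖ := by
  rcases eq_or_ne p ⊤ with hp | hp
  · subst hp
    rw [WithLp.prod_norm_eq_sup, WithLp.prod_norm_eq_sup]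
    exact sup_le_sup h1 h2
  · have hpt : 0 < p.toReal :=
      ENNReal.toReal_pos (lt_of_lt_of_le zero_lt_one Fact.out).ne' hp
    rw [WithLp.prod_norm_eq_add hpt, WithLp.prod_norm_eq_add hpt]
    apply Real.rpow_le_rpow (by positivity)
      (add_le_add (Real.rpow_le_rpow (norm_nonneg _) h1 hpt.le)
        (Real.rpow_le_rpow (norm_nonneg _) h2 hpt.le)) (by positivity)

end DD2PAux

/-- The `ℓ_p`-sum (`1 ≤ p ≤ ∞`) of two Banach spaces with the DD2P has the DD2P. -/
theorem dd2p_lp_sum {X Y : Type*} [NormedAddCommGroup X] [NormedSpace ℝ X] [CompleteSpace X]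
    [NormedAddCommGroup Y] [NormedSpace ℝ Y] [CompleteSpace Y]
    (p : ℝ≥0∞) [Fact (1 ≤ p)] (hX : DD2P X) (hY : DD2P Y) :
    DD2P (WithLp p (X × Y)) := by
  intro V hV z hz hnorm ε hε
  obtain ⟨hzV, hzB⟩ := hz
  set δ : ℝ := min ε 2 with hδdef
  have hδpos : 0 < δ := lt_min hε two_pos
  have hδle2 : δ ≤ 2 := min_le_right _ _
  have hδleε : δ ≤ ε := min_le_left _ _
  obtain ⟨S, α, hα, hsub⟩ := exists_basic_nbhd hV hzV
  set e := WithLp.prodContinuousLinearEquiv p ℝ X Y with he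
  set inX : X →L[ℝ] WithLp p (X × Y) :=
    (e.symm : (X × Y) →L[ℝ] WithLp p (X × Y)).comp (ContinuousLinearMap.inl ℝ X Y) with hinX
  set inY : Y →L[ℝ] WithLp p (X × Y) :=
    (e.symm : (X × Y) →L[ℝ] WithLp p (X × Y)).comp (ContinuousLinearMap.inr ℝ X Y) with hinY
  set x : X := z.fst with hx
  set y : Y := z.snd with hy
  have hz_eq : inX x + inY y = z := by
    apply e.injective
    simp [hinX, hinY, he, Prod.ext_iff]
    exact ⟨hx, hy⟩
  obtain ⟨u, hu1, hu2, hu3⟩ := dd2p_key hX S (fun f => f.comp inX) x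
    (half_pos hα) (half_pos hδpos)
  obtain ⟨v, hv1, hv2, hv3⟩ := dd2p_key hY S (fun f => f.comp inY) y
    (half_pos hα) (half_pos hδpos)
  set w : WithLp p (X × Y) := inX (‖x‖ • u) + inY (‖y‖ • v) with hw
  have hwf : w.fst = ‖x‖ • u := by simp [hw, hinX, hinY, he]
  have hws : w.snd = ‖y‖ • v := by simp [hw, hinX, hinY, he]
  have hwV : w ∈ V := by
    apply hsub
    intro f hf
    have : f w - f z = (f (inX (‖x‖ • u)) - f (inX x)) + (f (inY (‖y‖ • v)) - f (inY y)) := by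
      rw [← hz_eq, hw, map_add, map_add]; ring
    calc |f w - f z| ≤ |f (inX (‖x‖ • u)) - f (inX x)| + |f (inY (‖y‖ • v)) - f (inY y)| := by
          rw [this]; exact abs_add_le _ _
      _ < α / 2 + α / 2 := add_lt_add (hu2 f hf) (hv2 f hf)
      _ = α := add_halves α
  have hwB : ‖w‖ ≤ 1 := by
    calc ‖w‖ ≤ ‖z‖ := by
          apply prod_norm_mono
          · rw [hwf, norm_smul, norm_norm, ← hx]
            calc ‖x‖ * ‖u‖ ≤ ‖x‖ * 1 := by
                  exact mul_le_mul_of_nonneg_left hu1 (norm_nonneg _)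
              _ = ‖x‖ := mul_one _
          · rw [hws, norm_smul, norm_norm, ← hy]
            calc ‖y‖ * ‖v‖ ≤ ‖y‖ * 1 := mul_le_mul_of_nonneg_left hv1 (norm_nonneg _)
              _ = ‖y‖ := mul_one _
      _ = 1 := hnorm
  refine ⟨w, ⟨hwV, mem_closedBall_zero_iff.mpr hwB⟩, ?_⟩
  have habs : |2 - δ / 2| = 2 - δ / 2 := abs_of_nonneg (by linarith)
  have hlow : 2 - δ / 2 ≤ ‖z - w‖ := by
    have h1 : ‖((2 - δ / 2) • z).fst‖ ≤ ‖(z - w).fst‖ := by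
      rw [WithLp.smul_fst, WithLp.sub_fst, hwf, norm_smul, Real.norm_eq_abs, habs, ← hx, mul_comm]
      exact hu3
    have h2 : ‖((2 - δ / 2) • z).snd‖ ≤ ‖(z - w).snd‖ := by
      rw [WithLp.smul_snd, WithLp.sub_snd, hws, norm_smul, Real.norm_eq_abs, habs, ← hy, mul_comm]
      exact hv3
    have := prod_norm_mono _ _ h1 h2
    rwa [norm_smul, Real.norm_eq_abs, habs, hnorm, mul_one] at this
  have : 2 - ε ≤ 2 - δ := by linarith
  linarith
end
end

section
/- Let X be a Banach space with the DD2P and Y ⊆ X a closed subspace such that X/Y is finite-dimensional. Then Y has the DD2P. -/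
noncomputable section

open Filter Topology Metric Set NormedSpace

section Aux

variable {E : Type*} [NormedAddCommGroup E] [NormedSpace ℝ E]

lemma isWeaklyOpen_preimage (W' : Set (WeakSpace ℝ E)) (h : IsOpen W') :
    IsWeaklyOpen E (⇑(toWeakSpace ℝ E) ⁻¹' W') := by
  unfold IsWeaklyOpen
  rw [Set.image_preimage_eq _ (toWeakSpace ℝ E).surjective]
  exact h

lemma exists_pos_forall_finset {α : Type*} (I : Finset α) (r : α → ℝ)
    (h : ∀ a ∈ I, 0 < r a) : ∃ δ > 0, ∀ a ∈ I, δ ≤ r a := by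
  rcases I.eq_empty_or_nonempty with rfl | hne
  · exact ⟨1, one_pos, by simp⟩
  · exact ⟨I.inf' hne r, (Finset.lt_inf'_iff hne).mpr h, fun a ha => Finset.inf'_le r ha⟩

lemma mem_weakly_open {V : Set E} (hV : IsWeaklyOpen E V) {x : E} (hx : x ∈ V) :
    ∃ (I : Finset (StrongDual ℝ E)) (δ : ℝ), 0 < δ ∧
      ∀ y : E, (∀ f ∈ I, |f y - f x| < δ) → y ∈ V := by
  unfold IsWeaklyOpen at hV
  obtain ⟨t, ht, hpre⟩ :=
    (isOpen_induced_iff (f := fun (z : WeakSpace ℝ E) (f : StrongDual ℝ E) =>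
      (topDualPairing ℝ E).flip z f)).mp hV
  have hxt : (fun f : StrongDual ℝ E => f x) ∈ t := by
    have : toWeakSpace ℝ E x ∈ (fun (z : WeakSpace ℝ E) (f : StrongDual ℝ E) =>
        (topDualPairing ℝ E).flip z f) ⁻¹' t := by
      rw [hpre]; exact ⟨x, hx, rfl⟩
    exact this
  obtain ⟨I, u, hu, hsub⟩ := isOpen_pi_iff.mp ht _ hxt
  have hball : ∀ f ∈ I, ∃ r > 0, Metric.ball (f x) r ⊆ u f := fun f hf =>
    Metric.isOpen_iff.mp (hu f hf).1 _ (hu f hf).2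
  choose! r hr hrsub using hball
  obtain ⟨δ, hδ, hδle⟩ := exists_pos_forall_finset I r hr
  refine ⟨I, δ, hδ, fun y hy => ?_⟩
  have hyt : (fun f : StrongDual ℝ E => f y) ∈ t := by
    apply hsub
    intro f hf
    apply hrsub f hf
    rw [Metric.mem_ball, Real.dist_eq]
    exact lt_of_lt_of_le (hy f hf) (hδle f hf)
  have : toWeakSpace ℝ E y ∈ (fun (z : WeakSpace ℝ E) (f : StrongDual ℝ E) =>
      (topDualPairing ℝ E).flip z f) ⁻¹' t := hyt
  rw [hpre] at this
  exact ((toWeakSpace ℝ E).injective.mem_set_image).mp this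

lemma eval_weak_continuous (f : StrongDual ℝ E) :
    Continuous fun z : WeakSpace ℝ E => f ((toWeakSpace ℝ E).symm z) :=
  WeakBilin.eval_continuous ((topDualPairing ℝ E).flip) f

end Aux

section Aux2
set_option linter.unusedSectionVars false
variable {X : Type*} [NormedAddCommGroup X] [NormedSpace ℝ X] [CompleteSpace X]

lemma t2_quot (Y : Subspace ℝ X) (hclosed : IsClosed (Y : Set X)) : T2Space (X ⧸ Y) := by
  haveI : T0Space (X ⧸ Y) := by
    refine t0Space_iff_inseparable _ |>.mpr fun a b h => ?_
    rw [Metric.inseparable_iff, dist_eq_norm] at h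
    obtain ⟨m, rfl⟩ := Submodule.Quotient.mk_surjective Y a
    obtain ⟨k, rfl⟩ := Submodule.Quotient.mk_surjective Y b
    rw [← Submodule.Quotient.mk_sub] at h
    have : m - k ∈ Y := by
      have := (QuotientAddGroup.norm_mk_eq_zero_iff_mem_closure (S := Y.toAddSubgroup) (m := m - k)).mp h
      rwa [show (↑Y.toAddSubgroup : Set X) = (Y : Set X) from rfl, hclosed.closure_eq] at this
    rwa [Submodule.Quotient.eq]
  infer_instance

lemma quot_small (Y : Subspace ℝ X) (hclosed : IsClosed (Y : Set X))
    (hcodim : FiniteDimensional ℝ (X ⧸ Y)) {η : ℝ} (hη : 0 < η) :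
    ∃ (n : ℕ) (g : Fin n → (StrongDual ℝ X)) (η' : ℝ), 0 < η' ∧
      (∀ i, ∀ z ∈ Y, g i z = 0) ∧
      ∀ z : X, (∀ i, |g i z| < η') → ‖(Submodule.Quotient.mk z : X ⧸ Y)‖ < η := by
  haveI := t2_quot Y hclosed
  set πC : X →L[ℝ] (X ⧸ Y) :=
    Y.mkQ.mkContinuous 1 (fun x => by simpa using Submodule.Quotient.norm_mk_le Y x) with hπC
  set n := Module.finrank ℝ (X ⧸ Y)
  set b : Module.Basis (Fin n) ℝ (X ⧸ Y) := Module.finBasis ℝ (X ⧸ Y)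
  set S := ∑ i, ‖b i‖ with hS
  have hS0 : 0 ≤ S := Finset.sum_nonneg fun i _ => norm_nonneg _
  set η' := η / (S + 1) with hη'
  have hη'0 : 0 < η' := div_pos hη (by linarith)
  refine ⟨n, fun i => ((b.coord i).toContinuousLinearMap).comp πC, η', hη'0, ?_, fun z hz => ?_⟩
  · intro i z hz
    have : (Submodule.Quotient.mk z : X ⧸ Y) = 0 := (Submodule.Quotient.mk_eq_zero Y).mpr hz
    simp [πC, Submodule.mkQ_apply, this]
  · have hv : (Submodule.Quotient.mk z : X ⧸ Y) = ∑ i, b.repr (Submodule.Quotient.mk z) i • b i :=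
      (b.sum_repr _).symm
    have hcoord : ∀ i, |b.repr (Submodule.Quotient.mk z) i| < η' := by
      intro i
      have := hz i
      simpa [πC, Module.Basis.coord_apply, Submodule.mkQ_apply] using this
    calc ‖(Submodule.Quotient.mk z : X ⧸ Y)‖
        = ‖∑ i, b.repr (Submodule.Quotient.mk z) i • b i‖ := by rw [← hv]
      _ ≤ ∑ i, ‖b.repr (Submodule.Quotient.mk z) i • b i‖ := norm_sum_le _ _
      _ ≤ ∑ i, η' * ‖b i‖ := by
          refine Finset.sum_le_sum fun i _ => ?_
          rw [norm_smul, Real.norm_eq_abs]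
          exact mul_le_mul_of_nonneg_right (hcoord i).le (norm_nonneg _)
      _ = η' * S := by rw [hS, Finset.mul_sum]
      _ < η' * (S + 1) := by nlinarith
      _ = η := by rw [hη', div_mul_cancel₀ η (ne_of_gt (by linarith))]


end Aux2

/-- The DD2P passes to closed finite-codimensional subspaces. -/
theorem dd2p_finite_codim {X : Type*} [NormedAddCommGroup X] [NormedSpace ℝ X] [CompleteSpace X]
    (hX : DD2P X) (Y : Subspace ℝ X) (hclosed : IsClosed (Y : Set X))
    (hcodim : FiniteDimensional ℝ (X ⧸ Y)) :
    DD2P Y := by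
  intro V hV x hx hxnorm ε hε
  obtain ⟨hxV, hxB⟩ := hx
  obtain ⟨I, δ, hδ, hI⟩ := mem_weakly_open hV hxV
  choose F hFext hFnorm using fun f : StrongDual ℝ Y => exists_extension_norm_eq Y f
  set M := ∑ f ∈ I, ‖F f‖ with hMdef
  have hM : ∀ f ∈ I, ‖F f‖ ≤ M := fun f hf =>
    Finset.single_le_sum (fun g _ => norm_nonneg (F g)) hf
  have hM0 : 0 ≤ M := Finset.sum_nonneg fun g _ => norm_nonneg (F g)
  set η := min (ε/4) (δ/(4*(M+1))) with hηdef
  have hη : 0 < η := lt_min (by linarith) (by positivity)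
  have hηε : η ≤ ε/4 := min_le_left _ _
  have hηδ : η ≤ δ/(4*(M+1)) := min_le_right _ _
  obtain ⟨n, g, η', hη'0, hgY, hquot⟩ := quot_small Y hclosed hcodim hη
  -- the weakly open set in X
  set W' : Set (WeakSpace ℝ X) :=
    (⋂ f ∈ I, (fun z : WeakSpace ℝ X => F f ((toWeakSpace ℝ X).symm z)) ⁻¹'
        (Metric.ball (F f ↑x) (δ/2)))
    ∩ ⋂ i, (fun z : WeakSpace ℝ X => g i ((toWeakSpace ℝ X).symm z)) ⁻¹'
        (Metric.ball 0 η') with hW'def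
  have hW'open : IsOpen W' := by
    apply IsOpen.inter
    · exact isOpen_biInter_finset fun f _ =>
        (eval_weak_continuous (F f)).isOpen_preimage _ Metric.isOpen_ball
    · exact isOpen_iInter_of_finite fun i =>
        (eval_weak_continuous (g i)).isOpen_preimage _ Metric.isOpen_ball
  have hWopen : IsWeaklyOpen X (⇑(toWeakSpace ℝ X) ⁻¹' W') := isWeaklyOpen_preimage W' hW'open
  have hmemW' : ∀ w : X, toWeakSpace ℝ X w ∈ W' ↔
      (∀ f ∈ I, |F f w - F f ↑x| < δ/2) ∧ ∀ i, |g i w| < η' := by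
    intro w
    simp only [hW'def, Set.mem_inter_iff, Set.mem_iInter, Set.mem_preimage, Metric.mem_ball,
      Real.dist_eq, LinearEquiv.symm_apply_apply, Real.dist_0_eq_abs, sub_zero]
  have hxW : (↑x : X) ∈ ⇑(toWeakSpace ℝ X) ⁻¹' W' := by
    rw [Set.mem_preimage, hmemW']
    constructor
    · intro f _
      rw [sub_self, abs_zero]
      positivity
    · intro i
      rw [hgY i ↑x x.2]
      simpa using hη'0
  have hxnX : ‖(↑x : X)‖ = 1 := hxnorm
  have hxBX : (↑x : X) ∈ closedBall (0 : X) 1 := by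
    rw [mem_closedBall, dist_zero_right, hxnX]
  obtain ⟨z, ⟨hzW, hzB⟩, hz2⟩ :=
    hX _ hWopen ↑x ⟨hxW, hxBX⟩ hxnX (ε/2) (by linarith)
  rw [Set.mem_preimage, hmemW'] at hzW
  obtain ⟨hzF, hzg⟩ := hzW
  have hznorm : ‖z‖ ≤ 1 := by rwa [mem_closedBall, dist_zero_right] at hzB
  -- z is close to Y
  have hπz : ‖(Submodule.Quotient.mk z : X ⧸ Y)‖ < η := hquot z hzg
  obtain ⟨m, hmk, hm⟩ := Submodule.Quotient.norm_mk_lt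
    (Submodule.Quotient.mk z : X ⧸ Y) (sub_pos.mpr hπz)
  have hmη : ‖m‖ < η := by linarith [hm]
  have hy0mem : z - m ∈ Y := by
    have : m - z ∈ Y := (Submodule.Quotient.eq Y).mp hmk
    simpa using Y.neg_mem this
  set y₀ : Y := ⟨z - m, hy0mem⟩ with hy₀def
  have hzy₀ : ‖z - (↑y₀ : X)‖ < η := by
    simpa [hy₀def, sub_sub_cancel] using hmη
  have hy₀norm : ‖(↑y₀ : X)‖ ≤ 1 + η := by
    have heq : (↑y₀ : X) = z - (z - ↑y₀) := (sub_sub_cancel z _).symm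
    rw [heq]
    calc ‖z - (z - ↑y₀)‖ ≤ ‖z‖ + ‖z - ↑y₀‖ := norm_sub_le _ _
      _ ≤ 1 + η := by linarith
  set y : Y := (1+η)⁻¹ • y₀ with hydef
  have h1η : (0:ℝ) < 1 + η := by linarith
  have hynorm : ‖y‖ ≤ 1 := by
    show ‖(↑y : X)‖ ≤ 1
    have heq : (↑y : X) = (1+η)⁻¹ • (↑y₀ : X) := by rw [hydef]; push_cast; ring
    rw [heq, norm_smul, Real.norm_eq_abs, abs_of_pos (by positivity), inv_mul_le_iff₀ h1η]
    simpa using hy₀norm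
  have hyy₀ : ‖(↑y : X) - ↑y₀‖ ≤ η := by
    have : (↑y : X) - ↑y₀ = ((1+η)⁻¹ - 1) • (↑y₀ : X) := by
      rw [hydef]; push_cast; rw [sub_smul, one_smul]
    rw [this, norm_smul, Real.norm_eq_abs]
    have habs : |(1+η)⁻¹ - 1| = η / (1+η) := by
      have h2 : (1+η)⁻¹ - 1 = -(η/(1+η)) := by field_simp; ring
      rw [h2, abs_neg, abs_of_nonneg (by positivity)]
    rw [habs]
    calc η / (1+η) * ‖(↑y₀ : X)‖ ≤ η / (1+η) * (1+η) :=
          mul_le_mul_of_nonneg_left hy₀norm (by positivity)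
      _ = η := by field_simp
  have hyz : ‖(↑y : X) - z‖ < 2*η := by
    calc ‖(↑y : X) - z‖ ≤ ‖(↑y : X) - ↑y₀‖ + ‖(↑y₀ : X) - z‖ := norm_sub_le_norm_sub_add_norm_sub _ _ _
      _ < η + η := by
          have : ‖(↑y₀ : X) - z‖ = ‖z - ↑y₀‖ := norm_sub_rev _ _
          rw [this]
          exact add_lt_add_of_le_of_lt hyy₀ hzy₀
      _ = 2*η := by ring
  have hyV : y ∈ V := by
    apply hI
    intro f hf
    have h1 : f y - f x = F f ↑y - F f ↑x := by rw [hFext, hFext]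
    rw [h1]
    have h2 : |F f ↑y - F f z| ≤ M * (2*η) := by
      calc |F f ↑y - F f z| = |F f ((↑y : X) - z)| := by rw [map_sub]
        _ ≤ ‖F f‖ * ‖(↑y : X) - z‖ := (F f).le_opNorm _
        _ ≤ M * (2*η) := by
            apply mul_le_mul (hM f hf) hyz.le (norm_nonneg _) hM0
    have h3 : |F f z - F f ↑x| < δ/2 := hzF f hf
    have hMη : M * (2*η) ≤ δ/2 := by
      have : η * (4*(M+1)) ≤ δ := by
        rw [← le_div_iff₀ (by positivity)] at *
        linarith [hηδ]
      nlinarith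
    calc |F f ↑y - F f ↑x| ≤ |F f ↑y - F f z| + |F f z - F f ↑x| := abs_sub_le _ _ _
      _ < M * (2*η) + δ/2 := by linarith
      _ ≤ δ := by linarith
  refine ⟨y, ⟨hyV, by rwa [mem_closedBall, dist_zero_right]⟩, ?_⟩
  have hfin : ‖(↑x : X) - ↑y‖ > 2 - ε := by
    have h4 : ‖(↑x : X) - z‖ ≤ ‖(↑x : X) - ↑y‖ + ‖(↑y : X) - z‖ := norm_sub_le_norm_sub_add_norm_sub _ _ _
    have : 2 - ε/2 < ‖(↑x : X) - z‖ := hz2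
    have h2η : 2*η ≤ ε/2 := by linarith
    linarith
  exact_mod_cast hfin
end
end

section
/- Let X be a Banach space such that X* has the w*-DD2P, and let Y ⊆ X be a finite-dimensional subspace. Then (X/Y)* (identified with the annihilator Y° ⊆ X* with its weak-star topology) has the w*-DD2P. -/
noncomputable section

open Filter Topology Metric Set NormedSpace

private lemma aux_ball {E : Type*} [NormedAddCommGroup E] [NormedSpace ℝ E]
    (g m : E) (hg : ‖g‖ ≤ 1) : ‖(1 + ‖m‖)⁻¹ • (g - m)‖ ≤ 1 := by
  have h1 : (0:ℝ) < 1 + ‖m‖ := by positivity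
  rw [norm_smul, Real.norm_eq_abs, abs_of_pos (inv_pos.mpr h1)]
  have h2 : ‖g - m‖ ≤ 1 + ‖m‖ := le_trans (norm_sub_le _ _) (by linarith)
  calc (1 + ‖m‖)⁻¹ * ‖g - m‖ ≤ (1 + ‖m‖)⁻¹ * (1 + ‖m‖) :=
        mul_le_mul_of_nonneg_left h2 (inv_pos.mpr h1).le
    _ = 1 := inv_mul_cancel₀ (ne_of_gt h1)

private lemma aux_close {E : Type*} [NormedAddCommGroup E] [NormedSpace ℝ E]
    (g m : E) (hg : ‖g‖ ≤ 1) : ‖g - (1 + ‖m‖)⁻¹ • (g - m)‖ ≤ 2 * ‖m‖ := by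
  set n := ‖m‖ with hn
  have hn0 : (0:ℝ) ≤ n := norm_nonneg _
  have h1 : (0:ℝ) < 1 + n := by linarith
  set c : ℝ := (1 + n)⁻¹ with hc
  have hc1 : c * (1 + n) = 1 := inv_mul_cancel₀ (ne_of_gt h1)
  have hc0 : 0 < c := inv_pos.mpr h1
  have hexp : c + c * n = 1 := by linear_combination hc1
  have hcn0 : 0 ≤ c * n := mul_nonneg hc0.le hn0
  have hcle : c ≤ 1 := by linarith
  have hcnn : c * n ≤ n := by nlinarith [mul_le_mul_of_nonneg_right hcle hn0]
  have key : g - c • (g - m) = (1 - c) • g + c • m := by module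
  rw [key]
  calc ‖(1 - c) • g + c • m‖ ≤ ‖(1 - c) • g‖ + ‖c • m‖ := norm_add_le _ _
    _ = (1 - c) * ‖g‖ + c * n := by
        rw [norm_smul, norm_smul, Real.norm_eq_abs, Real.norm_eq_abs,
          abs_of_nonneg (by linarith), abs_of_pos hc0, ← hn]
    _ ≤ 2 * n := by
        have h3 : (1 - c) * ‖g‖ ≤ (1 - c) * 1 :=
          mul_le_mul_of_nonneg_left hg (by linarith)
        have h4 : 1 - c = c * n := by linarith
        linarith

/-- If `X*` has the w*-DD2P and `Y ⊆ X` is finite-dimensional, then `(X/Y)*`, identified with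
the annihilator `Y° ⊆ X*` endowed with the relative weak-star topology and dual norm, has
the w*-DD2P. -/
theorem wstar_dd2p_quotient {X : Type*} [NormedAddCommGroup X] [NormedSpace ℝ X]
    [CompleteSpace X]
    (h : WStarDD2P X) (Y : Subspace ℝ X) (hY : FiniteDimensional ℝ Y) :
    ∀ V : Set (StrongDual ℝ X), IsWStarOpen V →
      ∀ f ∈ V ∩ closedBall (0 : StrongDual ℝ X) 1, (∀ y ∈ Y, f y = 0) → ‖f‖ = 1 →
        ∀ ε > (0 : ℝ),
          ∃ g ∈ V ∩ closedBall (0 : StrongDual ℝ X) 1,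
            (∀ y ∈ Y, g y = 0) ∧ 2 - ε < ‖f - g‖ := by
  intro V hV f hf hfY hf1 ε hε
  obtain ⟨hfV, hfB⟩ := hf
  obtain ⟨Q, hQ⟩ := Submodule.ClosedComplemented.of_finiteDimensional Y
  set QX : X →L[ℝ] X := Y.subtypeL.comp Q with hQX
  have hQXmem : ∀ x, QX x ∈ Y := fun x => (Q x).2
  have hQXfix : ∀ y ∈ Y, QX y = y := by
    intro y hy
    show (Y.subtypeL (Q y) : X) = y
    rw [hQ ⟨y, hy⟩]
    rfl
  -- the correction map at the normed dual level
  set Tn : StrongDual ℝ X → StrongDual ℝ X :=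
    fun g => (1 + ‖g.comp QX‖)⁻¹ • (g - g.comp QX) with hTn
  have hTnY : ∀ g, ∀ y ∈ Y, Tn g y = 0 := by
    intro g y hy
    simp only [hTn, ContinuousLinearMap.smul_apply, ContinuousLinearMap.sub_apply,
      ContinuousLinearMap.comp_apply]
    rw [show QX y = y from hQXfix y hy]
    simp
  have hcompf : f.comp QX = 0 := by
    ext x; exact hfY _ (hQXmem x)
  have hTnf : Tn f = f := by
    simp [hTn, hcompf]
  -- norm bounds
  have hTn_ball : ∀ g : StrongDual ℝ X, ‖g‖ ≤ 1 → ‖Tn g‖ ≤ 1 :=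
    fun g hg => aux_ball g (g.comp QX) hg
  have hTn_close : ∀ g : StrongDual ℝ X, ‖g‖ ≤ 1 → ‖g - Tn g‖ ≤ 2 * ‖g.comp QX‖ :=
    fun g hg => aux_close g (g.comp QX) hg
  -- continuity on the weak dual
  haveI : FiniteDimensional ℝ (WeakDual ℝ Y) :=
    Module.Finite.equiv (StrongDual.toWeakDual : StrongDual ℝ Y ≃ₗ[ℝ] WeakDual ℝ Y)
  have rho_cont : Continuous fun g : WeakDual ℝ X =>
      (StrongDual.toWeakDual ((WeakDual.toStrongDual g).comp Y.subtypeL) : WeakDual ℝ Y) :=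
    WeakDual.continuous_of_continuous_eval fun y => WeakDual.eval_continuous (Y.subtypeL y)
  set pc : StrongDual ℝ Y →ₗ[ℝ] StrongDual ℝ X :=
    { toFun := fun φ => φ.comp Q,
      map_add' := fun a b => by ext x; simp,
      map_smul' := fun c a => by ext x; simp } with hpc
  have pc_cont : Continuous pc := pc.continuous_of_finiteDimensional
  have nfun_cont : Continuous fun g : WeakDual ℝ X => ‖(WeakDual.toStrongDual g).comp QX‖ := by
    have heq : ∀ g : WeakDual ℝ X, (WeakDual.toStrongDual g).comp QX
        = pc (WeakDual.toStrongDual (StrongDual.toWeakDual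
            ((WeakDual.toStrongDual g).comp Y.subtypeL))) := by
      intro g; ext x; rfl
    simp_rw [heq]
    exact (continuous_norm.comp pc_cont).comp
      ((WeakDual.toStrongDual : WeakDual ℝ Y ≃ₗ[ℝ] StrongDual ℝ Y).toLinearMap.continuous_of_finiteDimensional.comp rho_cont)
  have Mw_cont : Continuous fun g : WeakDual ℝ X =>
      (StrongDual.toWeakDual ((WeakDual.toStrongDual g).comp QX) : WeakDual ℝ X) :=
    WeakDual.continuous_of_continuous_eval fun x => WeakDual.eval_continuous (QX x)
  set Tw : WeakDual ℝ X → WeakDual ℝ X :=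
    fun w => StrongDual.toWeakDual (Tn (WeakDual.toStrongDual w)) with hTw
  have Tw_cont : Continuous Tw := by
    have : Tw = fun w : WeakDual ℝ X =>
        (1 + ‖(WeakDual.toStrongDual w).comp QX‖)⁻¹ •
          (w - StrongDual.toWeakDual ((WeakDual.toStrongDual w).comp QX)) := rfl
    rw [this]
    exact ((continuous_const.add nfun_cont).inv₀ (fun w => ne_of_gt (add_pos_of_pos_of_nonneg one_pos (norm_nonneg _)))).smul
      (continuous_id.sub Mw_cont)
  -- the open set U
  set δ : ℝ := ε / 8 with hδ
  have hδ0 : 0 < δ := by positivity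
  set U : Set (StrongDual ℝ X) := V ∩ {g | Tn g ∈ V} ∩ {g | ‖g.comp QX‖ < δ} with hU
  have himg : StrongDual.toWeakDual '' U
      = (StrongDual.toWeakDual '' V) ∩ (Tw ⁻¹' (StrongDual.toWeakDual '' V))
        ∩ {w : WeakDual ℝ X | ‖(WeakDual.toStrongDual w).comp QX‖ < δ} := by
    ext w
    constructor
    · rintro ⟨g, ⟨⟨hgV, hgT⟩, hgn⟩, rfl⟩
      exact ⟨⟨⟨g, hgV, rfl⟩, ⟨Tn g, hgT, rfl⟩⟩, hgn⟩
    · rintro ⟨⟨⟨g, hgV, rfl⟩, hT⟩, hn⟩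
      obtain ⟨g', hg'V, hg'⟩ := hT
      have : g' = Tn g := by
        have := congrArg WeakDual.toStrongDual hg'
        simpa [hTw] using this
      exact ⟨g, ⟨⟨hgV, show Tn g ∈ V from this ▸ hg'V⟩, hn⟩, rfl⟩
  have hUopen : IsWStarOpen U := by
    rw [IsWStarOpen, himg]
    exact ((hV.inter (hV.preimage Tw_cont)).inter (isOpen_lt nfun_cont continuous_const))
  have hfU : f ∈ U ∩ closedBall (0 : StrongDual ℝ X) 1 := by
    refine ⟨⟨⟨hfV, ?_⟩, ?_⟩, hfB⟩
    · show Tn f ∈ V; rw [hTnf]; exact hfV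
    · show ‖f.comp QX‖ < δ; rw [hcompf]; simpa using hδ0
  obtain ⟨g, ⟨⟨⟨hgV, hgT⟩, hgn⟩, hgB⟩, hdist⟩ := h U hUopen f hfU hf1 (ε/2) (by positivity)
  have hg1 : ‖g‖ ≤ 1 := by simpa [dist_eq_norm] using hgB
  refine ⟨Tn g, ⟨hgT, ?_⟩, hTnY g, ?_⟩
  · simpa [dist_eq_norm] using hTn_ball g hg1
  · have hclose : ‖g - Tn g‖ ≤ 2 * ‖g.comp QX‖ := hTn_close g hg1
    have : ‖f - g‖ ≤ ‖f - Tn g‖ + ‖g - Tn g‖ := by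
      have hsplit : f - g = (f - Tn g) + (Tn g - g) := by abel
      calc ‖f - g‖ = ‖(f - Tn g) + (Tn g - g)‖ := by rw [← hsplit]
        _ ≤ ‖f - Tn g‖ + ‖Tn g - g‖ := norm_add_le _ _
        _ = ‖f - Tn g‖ + ‖g - Tn g‖ := by rw [norm_sub_rev (Tn g) g]
    have hgnn : ‖g.comp QX‖ < δ := hgn
    linarith
end
end

section
/- Let X be a Banach space and Y ⊆ X a closed almost isometric ideal. If X has the DD2P, then Y has the DD2P. -/
noncomputable section

open Filter Topology Metric Set NormedSpace

/-- `Y` is an almost isometric ideal in `X`. -/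
def AlmostIsometricIdeal {X : Type*} [NormedAddCommGroup X] [NormedSpace ℝ X]
    (Y : Subspace ℝ X) : Prop :=
  ∀ ε > (0 : ℝ), ∀ E : Subspace ℝ X, FiniteDimensional ℝ E →
    ∃ T : E →ₗ[ℝ] Y,
      (∀ e : E, (e : X) ∈ Y → ((T e : Y) : X) = (e : X)) ∧
      ∀ e : E, (1 + ε)⁻¹ * ‖(e : X)‖ ≤ ‖((T e : Y) : X)‖ ∧
        ‖((T e : Y) : X)‖ ≤ (1 + ε) * ‖(e : X)‖



theorem weak_nbhd_basis {Y : Type*} [NormedAddCommGroup Y] [NormedSpace ℝ Y] (V : Set Y)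
    (hV : IsOpen (toWeakSpace ℝ Y '' V)) (x : Y) (hx : x ∈ V) :
    ∃ (s : Finset (StrongDual ℝ Y)) (δ : ℝ), 0 < δ ∧
      ∀ y : Y, (∀ f ∈ s, |f y - f x| < δ) → y ∈ V := by
  obtain ⟨t, ht, htV⟩ := isOpen_induced_iff.mp hV
  have hxt : (fun f : StrongDual ℝ Y => f x) ∈ t := by
    have : toWeakSpace ℝ Y x ∈ toWeakSpace ℝ Y '' V := ⟨x, hx, rfl⟩
    rw [← htV] at this; exact this
  obtain ⟨I, u, hu, hsub⟩ := isOpen_pi_iff.mp ht _ hxt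
  have hrad : ∀ f : StrongDual ℝ Y, ∃ r : ℝ, 0 < r ∧ (f ∈ I → ball (f x) r ⊆ u f) := by
    intro f
    by_cases hf : f ∈ I
    · obtain ⟨r, hr, hball⟩ := Metric.isOpen_iff.mp (hu f hf).1 _ (hu f hf).2
      exact ⟨r, hr, fun _ => hball⟩
    · exact ⟨1, one_pos, fun h => absurd h hf⟩
  choose r hr hball using hrad
  by_cases hI : I.Nonempty
  · refine ⟨I, I.inf' hI r, ?_, ?_⟩
    · exact (Finset.lt_inf'_iff hI).mpr fun f hf => hr f
    · intro y hy
      have hmem : (fun f : StrongDual ℝ Y => f y) ∈ Set.pi ↑I u := by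
        intro f hf
        apply hball f hf
        rw [mem_ball, Real.dist_eq]
        exact lt_of_lt_of_le (hy f hf) (Finset.inf'_le r hf)
      have : toWeakSpace ℝ Y y ∈ toWeakSpace ℝ Y '' V := by
        rw [← htV]; exact hsub hmem
      obtain ⟨z, hz, hzy⟩ := this
      rwa [← (toWeakSpace ℝ Y).injective hzy]
  · refine ⟨∅, 1, one_pos, fun y _ => ?_⟩
    have hmem : (fun f : StrongDual ℝ Y => f y) ∈ Set.pi ↑I u := by
      intro f hf; exact absurd ⟨f, hf⟩ hI
    have : toWeakSpace ℝ Y y ∈ toWeakSpace ℝ Y '' V := by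
      rw [← htV]; exact hsub hmem
    obtain ⟨z, hz, hzy⟩ := this
    rwa [← (toWeakSpace ℝ Y).injective hzy]

theorem isWeaklyOpen_dual_set {X : Type*} [NormedAddCommGroup X] [NormedSpace ℝ X]
    (s : Finset (StrongDual ℝ X)) (c : StrongDual ℝ X → ℝ) (δ : ℝ) :
    IsOpen (toWeakSpace ℝ X '' {z : X | ∀ f ∈ s, |f z - c f| < δ}) := by
  have himg : toWeakSpace ℝ X '' {z : X | ∀ f ∈ s, |f z - c f| < δ}
      = ⋂ f ∈ s, {w : WeakSpace ℝ X | |((topDualPairing ℝ X).flip w) f - c f| < δ} := by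
    ext w
    constructor
    · rintro ⟨z, hz, rfl⟩
      simp only [Set.mem_iInter]
      intro f hf
      exact hz f hf
    · intro hw
      refine ⟨(toWeakSpace ℝ X).symm w, ?_, by simp⟩
      intro f hf
      simp only [Set.mem_iInter] at hw
      exact hw f hf
  rw [himg]
  refine isOpen_biInter_finset fun f hf => ?_
  have hc : Continuous fun w : WeakSpace ℝ X => |((topDualPairing ℝ X).flip w) f - c f| :=
    ((WeakBilin.eval_continuous _ f).sub continuous_const).abs
  exact isOpen_lt hc continuous_const

abbrev FDSub (X : Type*) [AddCommGroup X] [Module ℝ X] : Type _ :=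
  {E : Submodule ℝ X // FiniteDimensional ℝ E}

noncomputable instance {X : Type*} [AddCommGroup X] [Module ℝ X] : SemilatticeSup (FDSub X) :=
  Subtype.semilatticeSup fun E F hE hF =>
    @Submodule.finiteDimensional_sup ℝ X _ _ _ E F hE hF

instance {X : Type*} [AddCommGroup X] [Module ℝ X] : Nonempty (FDSub X) :=
  ⟨⟨⊥, inferInstance⟩⟩


theorem aiIdeal_key {X : Type*} [NormedAddCommGroup X] [NormedSpace ℝ X] (Y : Subspace ℝ X)
    (hai : AlmostIsometricIdeal Y) :
    ∃ g : StrongDual ℝ ↥Y → StrongDual ℝ X,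
      (∀ (f : StrongDual ℝ ↥Y) (y : ↥Y), g f (y : X) = f y) ∧
      (∀ (s : Finset (StrongDual ℝ ↥Y)) (x : ↥Y) (z : X) (ε : ℝ), 0 < ε →
        ∃ y₀ : ↥Y, (∀ f ∈ s, |f y₀ - g f z| < ε) ∧
          ‖(y₀ : X)‖ ≤ (1 + ε) * ‖z‖ ∧
          (1 + ε)⁻¹ * ‖(x : X) - z‖ ≤ ‖(x : X) - (y₀ : X)‖) := by
  classical
  set ι := FDSub X × ℕ with hι
  have hop : ∀ α : ι, ∃ T : ↥(α.1.1) →ₗ[ℝ] ↥Y,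
      (∀ e : ↥(α.1.1), (e : X) ∈ Y → ((T e : ↥Y) : X) = (e : X)) ∧
      ∀ e : ↥(α.1.1), (1 + ((α.2 : ℝ) + 1)⁻¹)⁻¹ * ‖(e : X)‖ ≤ ‖((T e : ↥Y) : X)‖ ∧
        ‖((T e : ↥Y) : X)‖ ≤ (1 + ((α.2 : ℝ) + 1)⁻¹) * ‖(e : X)‖ := by
    intro α
    have := α.1.2
    exact hai ((α.2 : ℝ) + 1)⁻¹ (by positivity) α.1.1 α.1.2
  choose T hfix hbnd using hop
  set U : Ultrafilter ι := Ultrafilter.of atTop with hU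
  have hUat : (U : Filter ι) ≤ atTop := Ultrafilter.of_le atTop
  -- membership of sections
  have hsec : ∀ (E₀ : Submodule ℝ X) (_ : FiniteDimensional ℝ E₀) (N : ℕ),
      {α : ι | E₀ ≤ α.1.1 ∧ N ≤ α.2} ∈ (U : Filter ι) := by
    intro E₀ hE₀ N
    apply hUat
    have : Set.Ici ((⟨E₀, hE₀⟩, N) : ι) ⊆ {α : ι | E₀ ≤ α.1.1 ∧ N ≤ α.2} := by
      rintro α ⟨h1, h2⟩
      exact ⟨h1, h2⟩
    exact mem_of_superset (Ici_mem_atTop _) this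
  -- eps bound
  have heps : ∀ α : ι, ((α.2 : ℝ) + 1)⁻¹ ≤ 1 := by
    intro α
    rw [inv_le_one_iff₀]
    right; linarith [Nat.cast_nonneg (α := ℝ) α.2]
  set h : StrongDual ℝ ↥Y → X → ι → ℝ :=
    fun f e α => if he : e ∈ α.1.1 then f (T α ⟨e, he⟩) else 0 with hh
  have hbound : ∀ (f : StrongDual ℝ ↥Y) (e : X) (α : ι), |h f e α| ≤ 2 * ‖f‖ * ‖e‖ := by
    intro f e α
    rw [hh]
    dsimp only
    split_ifs with he
    · calc |f (T α ⟨e, he⟩)| ≤ ‖f‖ * ‖T α ⟨e, he⟩‖ := f.le_opNorm _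
        _ = ‖f‖ * ‖((T α ⟨e, he⟩ : ↥Y) : X)‖ := by rw [Submodule.coe_norm]
        _ ≤ ‖f‖ * ((1 + ((α.2 : ℝ) + 1)⁻¹) * ‖((⟨e, he⟩ : α.1.1) : X)‖) := by
            apply mul_le_mul_of_nonneg_left ((hbnd α ⟨e, he⟩).2) (norm_nonneg f)
        _ ≤ 2 * ‖f‖ * ‖e‖ := by
            have h1 : (1 + ((α.2 : ℝ) + 1)⁻¹) ≤ 2 := by linarith [heps α]
            have : ‖((⟨e, he⟩ : α.1.1) : X)‖ = ‖e‖ := rfl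
            rw [this]
            nlinarith [norm_nonneg f, norm_nonneg e, mul_le_mul_of_nonneg_right h1 (norm_nonneg e)]
    · simp; positivity
  have hlim : ∀ (f : StrongDual ℝ ↥Y) (e : X), ∃ c : ℝ, Tendsto (h f e) (U : Filter ι) (𝓝 c) ∧
      |c| ≤ 2 * ‖f‖ * ‖e‖ := by
    intro f e
    have hcpt : IsCompact (Icc (-(2 * ‖f‖ * ‖e‖)) (2 * ‖f‖ * ‖e‖)) := isCompact_Icc
    have hle : (U.map (h f e) : Filter ℝ) ≤ 𝓟 (Icc (-(2 * ‖f‖ * ‖e‖)) (2 * ‖f‖ * ‖e‖)) := by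
      rw [le_principal_iff]
      have : ∀ α, h f e α ∈ Icc (-(2 * ‖f‖ * ‖e‖)) (2 * ‖f‖ * ‖e‖) := by
        intro α; rw [mem_Icc]; constructor
        · linarith [abs_le.mp (hbound f e α) |>.1]
        · exact abs_le.mp (hbound f e α) |>.2
      exact Filter.mem_map.mpr (by exact Filter.univ_mem' this)
    obtain ⟨c, hc, hlc⟩ := hcpt.ultrafilter_le_nhds (U.map (h f e)) hle
    refine ⟨c, ?_, abs_le.mpr ⟨by linarith [hc.1], hc.2⟩⟩
    rw [Tendsto, ← Ultrafilter.coe_map]; exact hlc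
    
  choose φ hφ hφbnd using hlim
  -- eventually-membership helper
  have hev : ∀ e : X, {α : ι | e ∈ α.1.1} ∈ (U : Filter ι) := by
    intro e
    have hfd : FiniteDimensional ℝ (Submodule.span ℝ ({e} : Set X)) :=
      FiniteDimensional.span_of_finite ℝ (Set.finite_singleton e)
    refine mem_of_superset (hsec _ hfd 0) ?_
    rintro α ⟨h1, -⟩
    exact h1 (Submodule.subset_span rfl)
  have hev2 : ∀ e₁ e₂ : X, {α : ι | e₁ ∈ α.1.1 ∧ e₂ ∈ α.1.1} ∈ (U : Filter ι) :=
    fun e₁ e₂ => Filter.inter_mem (hev e₁) (hev e₂)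
  -- linearity
  have hadd : ∀ (f : StrongDual ℝ ↥Y) (e₁ e₂ : X), φ f (e₁ + e₂) = φ f e₁ + φ f e₂ := by
    intro f e₁ e₂
    have hcong : h f (e₁ + e₂) =ᶠ[(U : Filter ι)] fun α => h f e₁ α + h f e₂ α := by
      filter_upwards [hev2 e₁ e₂] with α hα
      obtain ⟨h1, h2⟩ := hα
      rw [hh]
      dsimp only
      rw [dif_pos (add_mem h1 h2), dif_pos h1, dif_pos h2, ← map_add, ← map_add]
      congr 1
    have t1 : Tendsto (h f (e₁ + e₂)) (U : Filter ι) (𝓝 (φ f e₁ + φ f e₂)) :=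
      (Tendsto.add (hφ f e₁) (hφ f e₂)).congr' hcong.symm
    exact tendsto_nhds_unique (hφ f (e₁ + e₂)) t1
  have hsmul : ∀ (f : StrongDual ℝ ↥Y) (c : ℝ) (e : X), φ f (c • e) = c * φ f e := by
    intro f c e
    have hcong : h f (c • e) =ᶠ[(U : Filter ι)] fun α => c * h f e α := by
      filter_upwards [hev e] with α hα
      rw [hh]
      dsimp only
      rw [dif_pos (Submodule.smul_mem _ c hα), dif_pos hα]
      have h1 : (⟨c • e, Submodule.smul_mem _ c hα⟩ : (α.1.1 : Submodule ℝ X)) = c • (⟨e, hα⟩ : (α.1.1 : Submodule ℝ X)) := rfl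
      rw [h1, map_smul, map_smul, smul_eq_mul]
    have t1 : Tendsto (h f (c • e)) (U : Filter ι) (𝓝 (c * φ f e)) :=
      ((hφ f e).const_mul c).congr' hcong.symm
    exact tendsto_nhds_unique (hφ f (c • e)) t1
  -- build the extensions
  set g : StrongDual ℝ ↥Y → StrongDual ℝ X := fun f =>
    LinearMap.mkContinuous
      { toFun := φ f
        map_add' := hadd f
        map_smul' := fun c e => hsmul f c e }
      (2 * ‖f‖) (fun e => by simpa [Real.norm_eq_abs, mul_assoc] using hφbnd f e) with hg
  have hgφ : ∀ (f : StrongDual ℝ ↥Y) (e : X), g f e = φ f e := fun f e => rfl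
  refine ⟨g, ?_, ?_⟩
  · -- extension property
    intro f y
    rw [hgφ]
    have hcong : h f (y : X) =ᶠ[(U : Filter ι)] fun _ => f y := by
      filter_upwards [hev (y : X)] with α hα
      rw [hh]
      dsimp only
      rw [dif_pos hα]
      congr 1
      have := hfix α ⟨(y : X), hα⟩ y.2
      exact Subtype.ext this
    have t1 : Tendsto (h f (y : X)) (U : Filter ι) (𝓝 (f y)) :=
      tendsto_const_nhds.congr' hcong.symm
    exact tendsto_nhds_unique (hφ f (y : X)) t1
  · -- approximation property
    intro s x z ε hε
    obtain ⟨N, hN⟩ := exists_nat_one_div_lt (K := ℝ) hε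
    have hfd : FiniteDimensional ℝ (Submodule.span ℝ ({(x : X), z} : Set X)) :=
      FiniteDimensional.span_of_finite ℝ (by simp [Set.finite_singleton])
    have hA : {α : ι | Submodule.span ℝ ({(x : X), z} : Set X) ≤ α.1.1 ∧ N ≤ α.2}
        ∈ (U : Filter ι) := hsec _ hfd N
    have hB : ∀ f ∈ s, {α : ι | |h f z α - φ f z| < ε} ∈ (U : Filter ι) := by
      intro f _
      have := (hφ f z).eventually (eventually_abs_sub_lt (φ f z) hε)
      filter_upwards [this] with α hα
      exact hα
    have hmem : ({α : ι | Submodule.span ℝ ({(x : X), z} : Set X) ≤ α.1.1 ∧ N ≤ α.2}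
        ∩ ⋂ f ∈ s, {α : ι | |h f z α - φ f z| < ε}) ∈ (U : Filter ι) :=
      Filter.inter_mem hA ((Filter.biInter_finset_mem s).mpr hB)
    obtain ⟨α, hα⟩ := Filter.nonempty_of_mem hmem
    obtain ⟨⟨hspan, hNα⟩, hball⟩ := hα
    have hxm : (x : X) ∈ α.1.1 := hspan (Submodule.subset_span (by simp))
    have hzm : z ∈ α.1.1 := hspan (Submodule.subset_span (by simp))
    have hεα : ((α.2 : ℝ) + 1)⁻¹ ≤ ε := by
      have h1 : (N : ℝ) + 1 ≤ (α.2 : ℝ) + 1 := by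
        have := Nat.cast_le (α := ℝ).mpr hNα
        linarith
      have h2 : (0 : ℝ) < (N : ℝ) + 1 := by positivity
      calc ((α.2 : ℝ) + 1)⁻¹ ≤ ((N : ℝ) + 1)⁻¹ := by
            apply inv_anti₀ h2 h1
        _ ≤ ε := by rw [← one_div]; linarith
    refine ⟨T α ⟨z, hzm⟩, ?_, ?_, ?_⟩
    · intro f hf
      have hα2 := Set.mem_iInter₂.mp hball f hf
      simp only [Set.mem_setOf_eq] at hα2
      have : h f z α = f (T α ⟨z, hzm⟩) := by
        rw [hh]; dsimp only; rw [dif_pos hzm]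
      rw [hgφ]
      rw [this] at hα2
      exact hα2
    · have := (hbnd α ⟨z, hzm⟩).2
      have h2 : ‖((⟨z, hzm⟩ : α.1.1) : X)‖ = ‖z‖ := rfl
      rw [h2] at this
      calc ‖((T α ⟨z, hzm⟩ : ↥Y) : X)‖ ≤ (1 + ((α.2 : ℝ) + 1)⁻¹) * ‖z‖ := this
        _ ≤ (1 + ε) * ‖z‖ := by nlinarith [norm_nonneg z]
    · set e : α.1.1 := ⟨(x : X), hxm⟩ - ⟨z, hzm⟩ with he
      have hce : ((e : α.1.1) : X) = (x : X) - z := rfl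
      have hTe : ((T α e : ↥Y) : X) = (x : X) - ((T α ⟨z, hzm⟩ : ↥Y) : X) := by
        rw [he, map_sub]
        push_cast
        rw [hfix α ⟨(x : X), hxm⟩ x.2]
      have := (hbnd α e).1
      rw [hce, hTe] at this
      calc (1 + ε)⁻¹ * ‖(x : X) - z‖
          ≤ (1 + ((α.2 : ℝ) + 1)⁻¹)⁻¹ * ‖(x : X) - z‖ := by
            apply mul_le_mul_of_nonneg_right _ (norm_nonneg _)
            apply inv_anti₀ (by positivity) (by linarith)
        _ ≤ ‖(x : X) - ((T α ⟨z, hzm⟩ : ↥Y) : X)‖ := this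

/-- The DD2P is inherited by closed almost isometric ideals. -/
theorem dd2p_almost_isometric_ideal {X : Type*} [NormedAddCommGroup X] [NormedSpace ℝ X]
    [CompleteSpace X] (Y : Subspace ℝ X) (hclosed : IsClosed (Y : Set X))
    (hai : AlmostIsometricIdeal Y) (hX : DD2P X) :
    DD2P Y := by
  classical
  intro V hV x hx hxn ε hε
  obtain ⟨s, δ, hδ, hs⟩ := weak_nbhd_basis V hV x hx.1
  obtain ⟨g, hg1, hg2⟩ := aiIdeal_key Y hai
  set M : ℝ := 1 + ∑ f ∈ s, ‖f‖ with hM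
  have hM1 : 1 ≤ M := by
    rw [hM]
    have : (0:ℝ) ≤ ∑ f ∈ s, ‖f‖ := Finset.sum_nonneg fun f _ => norm_nonneg f
    linarith
  have hMf : ∀ f ∈ s, ‖f‖ ≤ M := by
    intro f hf
    rw [hM]
    have := Finset.single_le_sum (f := fun f : StrongDual ℝ ↥Y => ‖f‖)
      (fun g _ => norm_nonneg g) hf
    linarith
  set ε₀ : ℝ := min 1 (min (ε/6) (δ/(4*M))) with hε₀
  have hε₀pos : 0 < ε₀ := by
    apply lt_min one_pos
    apply lt_min (by linarith) (by positivity)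
  have hε₀1 : ε₀ ≤ 1 := min_le_left _ _
  have hε₀ε : ε₀ ≤ ε/6 := le_trans (min_le_right _ _) (min_le_left _ _)
  have hε₀δ : ε₀ ≤ δ/(4*M) := le_trans (min_le_right _ _) (min_le_right _ _)
  -- the weakly open set in X
  set W : Set X := {z : X | ∀ f' ∈ s.image g, |f' z - f' (x : X)| < δ/2} with hW
  have hWopen : IsWeaklyOpen X W :=
    isWeaklyOpen_dual_set (s.image g) (fun f' => f' (x : X)) (δ/2)
  have hxW : (x : X) ∈ W := by
    intro f' _
    simp
    linarith
  have hxball : (x : X) ∈ closedBall (0 : X) 1 := by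
    rw [mem_closedBall_zero_iff, ← Submodule.coe_norm, hxn]
  have hxn' : ‖(x : X)‖ = 1 := by rw [← Submodule.coe_norm, hxn]
  obtain ⟨z, ⟨hzW, hzball⟩, hzfar⟩ := hX W hWopen (x : X) ⟨hxW, hxball⟩ hxn' ε₀ hε₀pos
  have hznorm : ‖z‖ ≤ 1 := mem_closedBall_zero_iff.mp hzball
  -- pull back into Y
  obtain ⟨y₀, hy₀s, hy₀n, hy₀far⟩ := hg2 s x z ε₀ hε₀pos
  have hy₀n1 : ‖(y₀ : X)‖ ≤ 1 + ε₀ := by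
    calc ‖(y₀ : X)‖ ≤ (1 + ε₀) * ‖z‖ := hy₀n
      _ ≤ (1 + ε₀) * 1 := by nlinarith
      _ = 1 + ε₀ := mul_one _
  set y : ↥Y := (1 + ε₀)⁻¹ • y₀ with hy
  have h1ε₀ : (0:ℝ) < 1 + ε₀ := by linarith
  have hyn : ‖y‖ ≤ 1 := by
    have hy₀c : ‖y₀‖ = ‖(y₀ : X)‖ := Submodule.coe_norm y₀
    rw [hy, norm_smul, Real.norm_eq_abs, abs_of_pos (inv_pos.mpr h1ε₀), hy₀c]
    calc (1 + ε₀)⁻¹ * ‖(y₀ : X)‖ ≤ (1 + ε₀)⁻¹ * (1 + ε₀) :=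
          mul_le_mul_of_nonneg_left hy₀n1 (by positivity)
      _ = 1 := inv_mul_cancel₀ (ne_of_gt h1ε₀)
  refine ⟨y, ⟨?_, ?_⟩, ?_⟩
  · -- y ∈ V
    apply hs
    intro f hf
    have hfy₀ : |f y₀| ≤ M * (1 + ε₀) := by
      calc |f y₀| ≤ ‖f‖ * ‖y₀‖ := f.le_opNorm _
        _ ≤ M * (1 + ε₀) := by
            have h4 : ‖y₀‖ ≤ 1 + ε₀ := by rw [Submodule.coe_norm]; exact hy₀n1
            have h5 : (0:ℝ) ≤ M := by linarith
            exact mul_le_mul (hMf f hf) h4 (norm_nonneg _) h5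
    have h1 : |f y - f y₀| ≤ ε₀ * M := by
      have : f y = (1 + ε₀)⁻¹ * f y₀ := by
        rw [hy, map_smul, smul_eq_mul]
      rw [this]
      have heq : (1 + ε₀)⁻¹ * f y₀ - f y₀ = -(ε₀ * ((1 + ε₀)⁻¹ * f y₀)) := by
        field_simp
        ring
      rw [heq, abs_neg, abs_mul, abs_of_pos hε₀pos, abs_mul,
        abs_of_pos (inv_pos.mpr h1ε₀)]
      calc ε₀ * ((1 + ε₀)⁻¹ * |f y₀|) ≤ ε₀ * ((1 + ε₀)⁻¹ * (M * (1 + ε₀))) := by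
            apply mul_le_mul_of_nonneg_left _ (le_of_lt hε₀pos)
            exact mul_le_mul_of_nonneg_left hfy₀ (by positivity)
        _ = ε₀ * M := by field_simp
    have h2 : |f y₀ - g f z| < ε₀ := hy₀s f hf
    have h3 : |g f z - f x| < δ/2 := by
      have := hzW (g f) (Finset.mem_image_of_mem g hf)
      rwa [hg1 f x] at this
    have hε₀M : ε₀ * M ≤ δ/4 := by
      have hM0 : (0:ℝ) < M := by linarith
      calc ε₀ * M ≤ (δ/(4*M)) * M := mul_le_mul_of_nonneg_right hε₀δ (le_of_lt hM0)
        _ = δ/4 := by field_simp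
    calc |f y - f x| ≤ |f y - f y₀| + |f y₀ - g f z| + |g f z - f x| := by
          have := abs_sub_le (f y) (f y₀) (f x)
          have := abs_sub_le (f y₀) (g f z) (f x)
          linarith [abs_sub_le (f y) (f y₀) (f x), abs_sub_le (f y₀) (g f z) (f x)]
      _ < ε₀ * M + ε₀ + δ/2 := add_lt_add (add_lt_add_of_le_of_lt h1 h2) h3
      _ ≤ δ/4 + δ/4 + δ/2 := by
          have : ε₀ ≤ δ/4 := by
            calc ε₀ = ε₀ * 1 := (mul_one _).symm
              _ ≤ ε₀ * M := mul_le_mul_of_nonneg_left hM1 (le_of_lt hε₀pos)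
              _ ≤ δ/4 := hε₀M
          linarith
      _ = δ := by ring
  · rw [mem_closedBall_zero_iff]; exact hyn
  · -- far away
    have hfar0 : (1 + ε₀)⁻¹ * (2 - ε₀) ≤ ‖(x : X) - (y₀ : X)‖ := by
      calc (1 + ε₀)⁻¹ * (2 - ε₀) ≤ (1 + ε₀)⁻¹ * ‖(x : X) - z‖ := by
            apply mul_le_mul_of_nonneg_left (le_of_lt hzfar) (by positivity)
        _ ≤ ‖(x : X) - (y₀ : X)‖ := hy₀far
    have hyy₀ : ‖(y₀ : X) - (y : X)‖ ≤ ε₀ := by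
      have hcoe : (y : X) = (1 + ε₀)⁻¹ • (y₀ : X) := by rw [hy]; rfl
      have : (y₀ : X) - (y : X) = (1 - (1 + ε₀)⁻¹) • (y₀ : X) := by
        rw [hcoe, sub_smul, one_smul]
      rw [this, norm_smul, Real.norm_eq_abs]
      have h1 : 1 - (1 + ε₀)⁻¹ = ε₀ / (1 + ε₀) := by field_simp; ring
      rw [h1, abs_of_pos (by positivity)]
      calc ε₀ / (1 + ε₀) * ‖(y₀ : X)‖ ≤ ε₀ / (1 + ε₀) * (1 + ε₀) := by
            apply mul_le_mul_of_nonneg_left hy₀n1 (by positivity)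
        _ = ε₀ := by field_simp
    have htri : ‖(x : X) - (y₀ : X)‖ ≤ ‖(x : X) - (y : X)‖ + ‖(y₀ : X) - (y : X)‖ := by
      have heq2 : (x : X) - (y₀ : X) = ((x : X) - (y : X)) - ((y₀ : X) - (y : X)) := by
        abel
      rw [heq2]
      exact norm_sub_le _ _
    have hkey : (1 + ε₀)⁻¹ * (2 - ε₀) - ε₀ ≤ ‖(x : X) - (y : X)‖ := by linarith
    have hcoesub : ‖x - y‖ = ‖(x : X) - (y : X)‖ := by
      rw [Submodule.coe_norm]; norm_cast
    rw [hcoesub]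
    have hnum : 2 - ε < (1 + ε₀)⁻¹ * (2 - ε₀) - ε₀ := by
      rw [← sub_pos]
      have hinv : (1 + ε₀)⁻¹ * (1 + ε₀) = 1 := inv_mul_cancel₀ (ne_of_gt h1ε₀)
      have expand : (1 + ε₀)⁻¹ * (2 - ε₀) - ε₀ - (2 - ε)
          = (1 + ε₀)⁻¹ * ((2 - ε₀) - (1 + ε₀) * (ε₀ + 2 - ε)) := by
        field_simp
        ring
      rw [expand]
      apply mul_pos (by positivity)
      nlinarith
    linarith
end
end

section
/- A Banach space X has the DSD2P if and only if for all x_1, ..., x_n ∈ B_X and all λ_1, ..., λ_n > 0 with Σλ_i = 1, there exist for each i a net (x^i_s)_{s ∈ S} in B_X converging weakly to x_i such that ‖Σ_{i=1}^n λ_i (x_i - x^i_s)‖ → 1 + ‖Σ_{i=1}^n λ_i x_i‖. -/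
noncomputable section

open Filter Topology Metric Set NormedSpace

universe u

section Aux

variable {X : Type u} [NormedAddCommGroup X] [NormedSpace ℝ X]

lemma isWeaklyOpen_univ' : IsWeaklyOpen X univ := by
  unfold IsWeaklyOpen
  rw [Set.image_univ, (toWeakSpace ℝ X).surjective.range_eq]
  exact isOpen_univ

lemma isWeaklyOpen_inter' {U V : Set X} (hU : IsWeaklyOpen X U) (hV : IsWeaklyOpen X V) :
    IsWeaklyOpen X (U ∩ V) := by
  unfold IsWeaklyOpen at *
  rw [Set.image_inter (toWeakSpace ℝ X).injective]
  exact hU.inter hV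

lemma isWeaklyOpen_preimage' (f : StrongDual ℝ X) {s : Set ℝ} (hs : IsOpen s) :
    IsWeaklyOpen X (f ⁻¹' s) := by
  have h1 : toWeakSpace ℝ X '' (f ⁻¹' s)
      = (fun w : WeakSpace ℝ X => f ((toWeakSpace ℝ X).symm w)) ⁻¹' s := by
    ext w
    constructor
    · rintro ⟨z, hz, rfl⟩
      simpa using hz
    · intro hw
      exact ⟨(toWeakSpace ℝ X).symm w, hw, by simp⟩
  have h2 : Continuous fun w : WeakSpace ℝ X => f ((toWeakSpace ℝ X).symm w) :=
    WeakBilin.eval_continuous ((topDualPairing ℝ X).flip) f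
  rw [IsWeaklyOpen, h1]
  exact h2.isOpen_preimage s hs

lemma flip_pairing_injective : Function.Injective ((topDualPairing ℝ X).flip) := by
  intro a b hab
  rw [NormedSpace.eq_iff_forall_dual_eq (𝕜 := ℝ)]
  intro g
  exact LinearMap.congr_fun hab g

end Aux


/-- Characterization of the DSD2P in terms of weakly convergent nets. -/
theorem dsd2p_iff_nets {X : Type u} [NormedAddCommGroup X] [NormedSpace ℝ X] [CompleteSpace X] :
    DSD2P X ↔ ∀ (n : ℕ) (lam : Fin n → ℝ) (x : Fin n → X),
      (∀ i, 0 < lam i) → ∑ i, lam i = 1 → (∀ i, x i ∈ closedBall (0 : X) 1) →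
      ∃ (ι : Type u) (l : Filter ι) (xs : Fin n → ι → X), l.NeBot ∧
        (∀ i s, xs i s ∈ closedBall (0 : X) 1) ∧
        (∀ i, ∀ f : StrongDual ℝ X,
          Tendsto (fun s => f (xs i s)) l (𝓝 (f (x i)))) ∧
        Tendsto (fun s => ‖∑ i, lam i • (x i - xs i s)‖) l
          (𝓝 (1 + ‖∑ i, lam i • x i‖)) := by
  constructor
  · -- DSD2P → nets
    intro hD n lam x hlam hsum hball
    -- index type
    let ι := {p : (Fin n → Set X) × ℝ // (∀ i, IsWeaklyOpen X (p.1 i) ∧ x i ∈ p.1 i) ∧ 0 < p.2}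
    letI : LE ι := ⟨fun s t => (∀ i, t.1.1 i ⊆ s.1.1 i) ∧ t.1.2 ≤ s.1.2⟩
    letI : Preorder ι :=
      { le := (· ≤ ·)
        lt := fun s t => s ≤ t ∧ ¬t ≤ s
        le_refl := fun s => ⟨fun i => subset_rfl, le_rfl⟩
        le_trans := fun a b c hab hbc =>
          ⟨fun i => (hbc.1 i).trans (hab.1 i), hbc.2.trans hab.2⟩
        lt_iff_le_not_ge := fun _ _ => Iff.rfl }
    haveI : Nonempty ι :=
      ⟨⟨(fun _ => univ, 1), ⟨fun i => ⟨isWeaklyOpen_univ', mem_univ _⟩, one_pos⟩⟩⟩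
    haveI : IsDirected ι (· ≤ ·) := by
      constructor
      intro s t
      refine ⟨⟨(fun i => s.1.1 i ∩ t.1.1 i, min s.1.2 t.1.2), ?_, ?_⟩, ?_, ?_⟩
      · exact fun i => ⟨isWeaklyOpen_inter' (s.2.1 i).1 (t.2.1 i).1,
          ⟨(s.2.1 i).2, (t.2.1 i).2⟩⟩
      · exact lt_min s.2.2 t.2.2
      · exact ⟨fun i => inter_subset_left, min_le_left _ _⟩
      · exact ⟨fun i => inter_subset_right, min_le_right _ _⟩
    -- apply DSD2P for each index
    have key : ∀ s : ι, ∃ y : Fin n → X,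
        (∀ i, y i ∈ s.1.1 i ∩ closedBall (0 : X) 1) ∧
        1 + ‖∑ i, lam i • x i‖ - s.1.2 < ‖∑ i, lam i • (x i - y i)‖ := by
      intro s
      have hx0 : (∑ i, lam i • x i) ∈ ConvComb n lam
          (fun i => s.1.1 i ∩ closedBall (0 : X) 1) :=
        ⟨x, fun i => ⟨(s.2.1 i).2, hball i⟩, rfl⟩
      obtain ⟨y0, hy0, hlt⟩ := hD n lam s.1.1 hlam hsum (fun i => (s.2.1 i).1)
        (fun i => ⟨x i, (s.2.1 i).2, hball i⟩) _ hx0 s.1.2 s.2.2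
      obtain ⟨y, hy, rfl⟩ := hy0
      refine ⟨y, hy, ?_⟩
      have : (∑ i, lam i • x i) - (∑ i, lam i • y i) = ∑ i, lam i • (x i - y i) := by
        rw [← Finset.sum_sub_distrib]
        exact Finset.sum_congr rfl fun i _ => (smul_sub _ _ _).symm
      rwa [this] at hlt
    choose ys hy1 hy2 using key
    refine ⟨ι, atTop, fun i s => ys s i, ?_, fun i s => (hy1 s i).2, ?_, ?_⟩
    · exact Filter.atTop_neBot_iff.2 ⟨inferInstance, inferInstance⟩
    · -- weak convergence
      intro i f
      rw [Metric.tendsto_nhds]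
      intro δ hδ
      have hU : IsWeaklyOpen X (f ⁻¹' Metric.ball (f (x i)) δ) :=
        isWeaklyOpen_preimage' f Metric.isOpen_ball
      have hUx : ∀ j, IsWeaklyOpen X (if j = i then f ⁻¹' Metric.ball (f (x i)) δ else univ)
          ∧ x j ∈ (if j = i then f ⁻¹' Metric.ball (f (x i)) δ else univ) := by
        intro j
        by_cases hj : j = i
        · subst hj
          simp only [if_pos rfl]
          exact ⟨hU, by simpa using hδ⟩
        · simp only [if_neg hj]
          exact ⟨isWeaklyOpen_univ', mem_univ _⟩
      set s0 : ι := ⟨(fun j => if j = i then f ⁻¹' Metric.ball (f (x i)) δ else univ, 1),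
        hUx, one_pos⟩
      filter_upwards [Filter.Ici_mem_atTop s0] with s hs
      have hmem : ys s i ∈ f ⁻¹' Metric.ball (f (x i)) δ := by
        have := hs.1 i (hy1 s i).1
        simpa [s0] using this
      simpa [Metric.mem_ball] using hmem
    · -- norm convergence
      rw [Metric.tendsto_nhds]
      intro δ hδ
      set s0 : ι := ⟨(fun _ => univ, δ / 2),
        fun i => ⟨isWeaklyOpen_univ', mem_univ _⟩, by linarith⟩
      filter_upwards [Filter.Ici_mem_atTop s0] with s hs
      have hlow := hy2 s
      have hs2 : s.1.2 ≤ δ / 2 := hs.2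
      have hup : ‖∑ i, lam i • (x i - ys s i)‖ ≤ 1 + ‖∑ i, lam i • x i‖ := by
        have hdist : (∑ i, lam i • (x i - ys s i))
            = (∑ i, lam i • x i) - (∑ i, lam i • ys s i) := by
          rw [← Finset.sum_sub_distrib]
          exact Finset.sum_congr rfl fun i _ => smul_sub _ _ _
        have hy : ‖∑ i, lam i • ys s i‖ ≤ 1 := by
          calc ‖∑ i, lam i • ys s i‖ ≤ ∑ i, ‖lam i • ys s i‖ := norm_sum_le _ _
            _ ≤ ∑ i, lam i := by
                refine Finset.sum_le_sum fun i _ => ?_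
                rw [norm_smul, Real.norm_eq_abs, abs_of_pos (hlam i)]
                have := mem_closedBall_zero_iff.1 (hy1 s i).2
                nlinarith [(hlam i).le]
            _ = 1 := hsum
        calc ‖∑ i, lam i • (x i - ys s i)‖ ≤ ‖∑ i, lam i • x i‖ + ‖∑ i, lam i • ys s i‖ := by
              rw [hdist]; exact norm_sub_le _ _
          _ ≤ 1 + ‖∑ i, lam i • x i‖ := by linarith
      rw [Real.dist_eq, abs_sub_lt_iff]
      constructor <;> linarith
  · -- nets → DSD2P
    intro hN n lam V hlam hsum hVopen _hVne x0 hx0 ε hε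
    obtain ⟨xv, hxv, rfl⟩ := hx0
    obtain ⟨ι, l, xs, hne, hbl, hweak, hnorm⟩ :=
      hN n lam xv hlam hsum (fun i => (hxv i).2)
    have hVmem : ∀ i, ∀ᶠ s in l, xs i s ∈ V i := by
      intro i
      have hw : Tendsto (fun s => toWeakSpace ℝ X (xs i s)) l
          (𝓝 (toWeakSpace ℝ X (xv i))) := by
        exact (WeakBilin.tendsto_iff_forall_eval_tendsto (l := l)
          (f := fun s => toWeakSpace ℝ X (xs i s)) (x := toWeakSpace ℝ X (xv i))
          _ flip_pairing_injective).2 fun f => hweak i f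
      have hop : toWeakSpace ℝ X '' V i ∈ 𝓝 (toWeakSpace ℝ X (xv i)) :=
        (hVopen i).mem_nhds ⟨xv i, (hxv i).1, rfl⟩
      filter_upwards [hw.eventually_mem hop] with s hsm
      obtain ⟨z, hz, hze⟩ := hsm
      rwa [← (toWeakSpace ℝ X).injective hze]
    have hnorme : ∀ᶠ s in l,
        1 + ‖∑ i, lam i • xv i‖ - ε < ‖∑ i, lam i • (xv i - xs i s)‖ :=
      hnorm.eventually (eventually_gt_nhds (by linarith))
    obtain ⟨s, hsV, hsn⟩ := ((Filter.eventually_all.2 hVmem).and hnorme).exists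
    refine ⟨∑ i, lam i • xs i s, ⟨fun i => xs i s, fun i => ⟨hsV i, hbl i s⟩, rfl⟩, ?_⟩
    have hdist : (∑ i, lam i • xv i) - (∑ i, lam i • xs i s)
        = ∑ i, lam i • (xv i - xs i s) := by
      rw [← Finset.sum_sub_distrib]
      exact Finset.sum_congr rfl fun i _ => (smul_sub _ _ _).symm
    rw [hdist]
    exact hsn
end
end

section
/- Let X and Y be Banach spaces with the DSD2P. Then X ⊕_∞ Y has the DSD2P. -/
noncomputable section

open Filter Topology Metric Set NormedSpace

section Aux

variable {X Y : Type*} [NormedAddCommGroup X] [NormedSpace ℝ X]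
  [NormedAddCommGroup Y] [NormedSpace ℝ Y]

/-- Preimages of weakly open sets under affine maps `u ↦ T u + c` are weakly open. -/
lemma isWeaklyOpen_affine_preimage {E : Type*} [NormedAddCommGroup E] [NormedSpace ℝ E]
    (T : X →L[ℝ] E) (c : E) (U : Set E)
    (hU : IsWeaklyOpen E U) : IsWeaklyOpen X {u : X | T u + c ∈ U} := by
  have hg : Continuous fun w : WeakSpace ℝ X =>
      (WeakSpace.map T w + toWeakSpace ℝ E c : WeakSpace ℝ E) :=
    (WeakSpace.map T).continuous.add continuous_const
  have himg : toWeakSpace ℝ X '' {u : X | T u + c ∈ U} =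
      (fun w : WeakSpace ℝ X => (WeakSpace.map T w + toWeakSpace ℝ E c : WeakSpace ℝ E)) ⁻¹'
        (toWeakSpace ℝ E '' U) := by
    ext w
    obtain ⟨u, rfl⟩ := (toWeakSpace ℝ X).surjective w
    have h1 : toWeakSpace ℝ X u ∈ toWeakSpace ℝ X '' {u : X | T u + c ∈ U} ↔ T u + c ∈ U :=
      (toWeakSpace ℝ X).injective.mem_set_image
    have h2 : WeakSpace.map T (toWeakSpace ℝ X u) + toWeakSpace ℝ E c
        = toWeakSpace ℝ E (T u + c) := rfl
    rw [h1, Set.mem_preimage, h2, (toWeakSpace ℝ E).injective.mem_set_image]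
  rw [IsWeaklyOpen, himg]
  exact hg.isOpen_preimage _ hU

/-- The key one-coordinate step: if `K` has the DSD2P and `E` decomposes through
`P : E →L K`, `J : K →L E`, `R : E →L E` appropriately, then the DSD2P estimate
holds in `E` at points where the norm is attained in the `K`-coordinate. -/
lemma dsd2p_key {K E : Type*} [NormedAddCommGroup K] [NormedSpace ℝ K]
    [NormedAddCommGroup E] [NormedSpace ℝ E]
    (hK : DSD2P K) (P : E →L[ℝ] K) (J : K →L[ℝ] E) (R : E →L[ℝ] E)
    (hPJ : ∀ (u : K) (z : E), P (J u + R z) = u)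
    (hrec : ∀ z : E, J (P z) + R z = z)
    (hball : ∀ (u : K) (z : E), ‖u‖ ≤ 1 → ‖z‖ ≤ 1 → ‖J u + R z‖ ≤ 1)
    (hP : ∀ z : E, ‖P z‖ ≤ ‖z‖)
    (n : ℕ) (lam : Fin n → ℝ) (V : Fin n → Set E)
    (hlam : ∀ i, 0 < lam i) (hsum : ∑ i, lam i = 1)
    (hVo : ∀ i, IsWeaklyOpen E (V i))
    (y : Fin n → E) (hy : ∀ i, y i ∈ V i ∩ closedBall (0 : E) 1)
    (hxn : ‖∑ i, lam i • y i‖ = ‖P (∑ i, lam i • y i)‖)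
    (ε : ℝ) (hε : 0 < ε) :
    ∃ w ∈ ConvComb n lam (fun i => V i ∩ closedBall (0 : E) 1),
      1 + ‖∑ i, lam i • y i‖ - ε < ‖∑ i, lam i • y i - w‖ := by
  set x : E := ∑ i, lam i • y i with hxdef
  set V' : Fin n → Set K := fun i => {u : K | J u + R (y i) ∈ V i} with hV'
  have hV'o : ∀ i, IsWeaklyOpen K (V' i) := fun i =>
    isWeaklyOpen_affine_preimage J (R (y i)) _ (hVo i)
  have hyball : ∀ i, ‖y i‖ ≤ 1 := fun i => mem_closedBall_zero_iff.mp (hy i).2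
  have hmem : ∀ i, P (y i) ∈ V' i ∩ closedBall (0 : K) 1 := by
    intro i
    refine ⟨?_, mem_closedBall_zero_iff.mpr ((hP (y i)).trans (hyball i))⟩
    show J (P (y i)) + R (y i) ∈ V i
    rw [hrec (y i)]
    exact (hy i).1
  have hPx : P x = ∑ i, lam i • P (y i) := by
    rw [hxdef, map_sum]
    simp
  have hPxmem : P x ∈ ConvComb n lam (fun i => V' i ∩ closedBall (0 : K) 1) :=
    ⟨fun i => P (y i), hmem, hPx⟩
  obtain ⟨w, ⟨y', hy', rfl⟩, hw⟩ :=
    hK n lam V' hlam hsum hV'o (fun i => ⟨P (y i), hmem i⟩) (P x) hPxmem ε hε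
  set z : Fin n → E := fun i => J (y' i) + R (y i) with hz
  have hzmem : ∀ i, z i ∈ V i ∩ closedBall (0 : E) 1 := by
    intro i
    refine ⟨(hy' i).1, mem_closedBall_zero_iff.mpr ?_⟩
    exact hball _ _ (mem_closedBall_zero_iff.mp (hy' i).2) (hyball i)
  refine ⟨∑ i, lam i • z i, ⟨z, hzmem, rfl⟩, ?_⟩
  have hPz : ∀ i, P (z i) = y' i := fun i => hPJ (y' i) (y i)
  have hPw : P (∑ i, lam i • z i) = ∑ i, lam i • y' i := by
    rw [map_sum]
    simp [hPz]
  calc 1 + ‖x‖ - ε = 1 + ‖P x‖ - ε := by rw [hxn]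
    _ < ‖P x - ∑ i, lam i • y' i‖ := hw
    _ = ‖P (x - ∑ i, lam i • z i)‖ := by rw [map_sub, hPw]
    _ ≤ ‖x - ∑ i, lam i • z i‖ := hP _

end Aux

section Sum

variable {X Y : Type*} [NormedAddCommGroup X] [NormedSpace ℝ X]
  [NormedAddCommGroup Y] [NormedSpace ℝ Y]

private def J1' : X →L[ℝ] WithLp ⊤ (X × Y) :=
  (WithLp.prodContinuousLinearEquiv ⊤ ℝ X Y).symm.toContinuousLinearMap ∘L
    ContinuousLinearMap.inl ℝ X Y

private def J2' : Y →L[ℝ] WithLp ⊤ (X × Y) :=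
  (WithLp.prodContinuousLinearEquiv ⊤ ℝ X Y).symm.toContinuousLinearMap ∘L
    ContinuousLinearMap.inr ℝ X Y

private def P1' : WithLp ⊤ (X × Y) →L[ℝ] X :=
  ContinuousLinearMap.fst ℝ X Y ∘L (WithLp.prodContinuousLinearEquiv ⊤ ℝ X Y).toContinuousLinearMap

private def P2' : WithLp ⊤ (X × Y) →L[ℝ] Y :=
  ContinuousLinearMap.snd ℝ X Y ∘L (WithLp.prodContinuousLinearEquiv ⊤ ℝ X Y).toContinuousLinearMap

private lemma norm_eq_max' (z : WithLp ⊤ (X × Y)) : ‖z‖ = max ‖P1' z‖ ‖P2' z‖ :=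
  WithLp.prod_norm_eq_sup z

private lemma rec1' (z : WithLp ⊤ (X × Y)) : J1' (P1' z) + (J2' ∘L P2') z = z := by
  apply WithLp.ofLp_injective
  simp [J1', J2', P1', P2']
  rfl

private lemma rec2' (z : WithLp ⊤ (X × Y)) : J2' (P2' z) + (J1' ∘L P1') z = z := by
  apply WithLp.ofLp_injective
  simp [J1', J2', P1', P2']
  rfl

private lemma PJ1' (u : X) (z : WithLp ⊤ (X × Y)) : P1' (J1' u + (J2' ∘L P2') z) = u := by
  simp [P1', J1', J2', P2']

private lemma PJ2' (v : Y) (z : WithLp ⊤ (X × Y)) : P2' (J2' v + (J1' ∘L P1') z) = v := by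
  simp [P2', J1', J2', P1']

private lemma ball1' (u : X) (z : WithLp ⊤ (X × Y)) (hu : ‖u‖ ≤ 1) (hz : ‖z‖ ≤ 1) :
    ‖J1' u + (J2' ∘L P2') z‖ ≤ 1 := by
  rw [norm_eq_max', PJ1']
  have h2 : P2' (J1' u + (J2' ∘L P2') z) = P2' z := by simp [P2', J1', J2']
  rw [h2]
  have : ‖P2' z‖ ≤ ‖z‖ := by rw [norm_eq_max' z]; exact le_max_right _ _
  exact max_le hu (this.trans hz)

private lemma ball2' (v : Y) (z : WithLp ⊤ (X × Y)) (hv : ‖v‖ ≤ 1) (hz : ‖z‖ ≤ 1) :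
    ‖J2' v + (J1' ∘L P1') z‖ ≤ 1 := by
  rw [norm_eq_max', PJ2']
  have h1 : P1' (J2' v + (J1' ∘L P1') z) = P1' z := by simp [P1', J1', J2']
  rw [h1]
  have : ‖P1' z‖ ≤ ‖z‖ := by rw [norm_eq_max' z]; exact le_max_left _ _
  exact max_le (this.trans hz) hv

end Sum

/-- The `ℓ_∞`-sum of two Banach spaces with the DSD2P has the DSD2P. -/
theorem dsd2p_linfty_sum {X Y : Type*} [NormedAddCommGroup X] [NormedSpace ℝ X]
    [CompleteSpace X] [NormedAddCommGroup Y] [NormedSpace ℝ Y] [CompleteSpace Y]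
    (hX : DSD2P X) (hY : DSD2P Y) : DSD2P (WithLp ⊤ (X × Y)) := by
  intro n lam V hlam hsum hVo hVne x hx ε hε
  obtain ⟨y, hy, rfl⟩ := hx
  rcases le_total ‖P2' (∑ i, lam i • y i)‖ ‖P1' (∑ i, lam i • y i)‖ with h | h
  · exact dsd2p_key hX P1' J1' (J2' ∘L P2') PJ1' rec1' ball1'
      (fun z => by rw [norm_eq_max' z]; exact le_max_left _ _)
      n lam V hlam hsum hVo y hy
      (by rw [norm_eq_max' (∑ i, lam i • y i)]; exact max_eq_left h) ε hε
  · exact dsd2p_key hY P2' J2' (J1' ∘L P1') PJ2' rec2' ball2'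
      (fun z => by rw [norm_eq_max' z]; exact le_max_right _ _)
      n lam V hlam hsum hVo y hy
      (by rw [norm_eq_max' (∑ i, lam i • y i)]; exact max_eq_right h) ε hε
end
end
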